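/- arXiv:1508.00655 — 3 statements merged into one kernel-verified Lean document; each statement's English description precedes it below -/
import Mathlib

section
/- Let Γ be a deterministic real d×D matrix with ΓΓᵀ = Σ, and let Z₁, Z₂ be independent random vectors in ℝ^D whose 2D coordinates are all i.i.d. with mean 0, variance 1, and finite fourth moment 3 + Δ₄. Set X = ΓZ₁ + μ₁ and Y = ΓZ₂ + μ₂, and δ := μ₁ − μ₂. Then E‖X − Y‖⁴ = 8·Tr(Σ²) + 2Δ₄·Σ_{k=1}^D ((ΓᵀΓ)_{kk})² + 8·δᵀΣδ + (2·Tr(Σ) + ‖δ‖²)². -/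
/-!
Write `X − Y = [Γ, −Γ] W + δ`, where `W = (Z₁, Z₂)` is a family of `2D` independent standardized
variables. With `A = [Γ, −Γ]ᵀ [Γ, −Γ]` and `b = [Γ, −Γ]ᵀ δ`, the squared distance is the polynomial
`WᵀAW + 2 bᵀW + ‖δ‖²` of degree two in `W`, so its second moment is determined by the mixed moments
of `W` up to order four:
`E[W_k W_l] = 1_{k=l}`, `E[W_k W_l W_m] = 1_{k=l=m} E[W_k³]` and
`E[W_k W_l W_m W_n] = 1_{k=l}1_{m=n} + 1_{k=m}1_{l=n} + 1_{k=n}1_{l=m} + (E[W_k⁴] − 3) 1_{k=l=m=n}`.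
They hold because a product of independent centred variables has mean zero as soon as one index
occurs only once. The third moments drop out because the two samples enter with opposite signs
and have equal third moments.
-/

open MeasureTheory ProbabilityTheory Matrix Finset

namespace Matrix

lemma mulVec_dotProduct_mulVec {m ι : Type*} [Fintype m] [Fintype ι] (M : Matrix m ι ℝ)
    (w : ι → ℝ) : (M *ᵥ w) ⬝ᵥ (M *ᵥ w) = w ⬝ᵥ (Mᵀ * M) *ᵥ w := by
  rw [← mulVec_mulVec, dotProduct_mulVec w Mᵀ, vecMul_transpose]

lemma mulVec_add_dotProduct_mulVec_add {m ι : Type*} [Fintype m] [Fintype ι]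
    (M : Matrix m ι ℝ) (w : ι → ℝ) (δ : m → ℝ) :
    (M *ᵥ w + δ) ⬝ᵥ (M *ᵥ w + δ) = w ⬝ᵥ (Mᵀ * M) *ᵥ w + 2 * ((Mᵀ *ᵥ δ) ⬝ᵥ w) + δ ⬝ᵥ δ := by
  have hcross : δ ⬝ᵥ M *ᵥ w = (Mᵀ *ᵥ δ) ⬝ᵥ w := by rw [dotProduct_mulVec, mulVec_transpose]
  rw [add_dotProduct, dotProduct_add, dotProduct_add, mulVec_dotProduct_mulVec,
    dotProduct_comm (M *ᵥ w) δ, hcross]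
  ring

lemma dotProduct_mulVec_eq_sum_prod {ι : Type*} [Fintype ι] (A : Matrix ι ι ℝ) (v : ι → ℝ) :
    v ⬝ᵥ A *ᵥ v = ∑ p : ι × ι, A p.1 p.2 * (v p.1 * v p.2) := by
  simp only [dotProduct, mulVec, Fintype.sum_prod_type, mul_sum]
  exact sum_congr rfl fun k _ => sum_congr rfl fun l _ => by ring

lemma trace_fromBlocks {n₁ n₂ R : Type*} [Fintype n₁] [Fintype n₂] [AddCommMonoid R]
    (A : Matrix n₁ n₁ R) (B : Matrix n₁ n₂ R) (C : Matrix n₂ n₁ R) (D : Matrix n₂ n₂ R) :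
    trace (fromBlocks A B C D) = trace A + trace D := by
  simp [trace, Fintype.sum_sum_type]

lemma trace_transpose_mul_self_sq {m n : Type*} [Fintype m] [Fintype n] [DecidableEq m]
    [DecidableEq n] (Γ : Matrix m n ℝ) : trace ((Γᵀ * Γ) ^ 2) = trace ((Γ * Γᵀ) ^ 2) := by
  simp only [sq, Matrix.mul_assoc]
  rw [trace_mul_comm]
  simp only [Matrix.mul_assoc]

end Matrix

section

variable {Ω : Type*} [MeasurableSpace Ω] {μ : Measure Ω}

lemma memLp_four_of_integrable_pow_four {f : Ω → ℝ} (hf : AEStronglyMeasurable f μ)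
    (h : Integrable (fun ω => f ω ^ 4) μ) : MemLp f 4 μ := by
  rw [← integrable_norm_rpow_iff hf (by norm_num) (by norm_num)]
  refine h.congr (ae_of_all _ fun ω => ?_)
  dsimp only
  rw [show (4 : ENNReal).toReal = ((4 : ℕ) : ℝ) by norm_num, Real.rpow_natCast, Real.norm_eq_abs,
    pow_abs, abs_of_nonneg (by positivity)]

lemma integrable_prod_of_memLp_four [IsFiniteMeasure μ] {n : ℕ} (hn : n ≤ 4)
    (f : Fin n → Ω → ℝ) (hf : ∀ j, MemLp (f j) 4 μ) : Integrable (fun ω => ∏ j, f j ω) μ := by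
  rcases Nat.eq_zero_or_pos n with rfl | hpos
  · simp
  have h := MemLp.prod' (s := univ) (p := fun _ => (n : ENNReal))
    fun j _ => (hf j).mono_exponent (by exact_mod_cast hn)
  rw [← memLp_one_iff_integrable]
  convert h
  simp [ENNReal.mul_inv_cancel, hpos.ne']

lemma integral_sum_mul {κ : Type*} [Fintype κ] (a : κ → ℝ) {f : κ → Ω → ℝ}
    (hf : ∀ i, Integrable (f i) μ) :
    ∫ ω, ∑ i, a i * f i ω ∂μ = ∑ i, a i * ∫ ω, f i ω ∂μ := by
  rw [integral_finsetSum _ fun i _ => (hf i).const_mul (a i)]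
  simp only [integral_const_mul]

lemma integral_sum_mul_sum {κ κ' : Type*} [Fintype κ] [Fintype κ'] (a : κ → ℝ) (b : κ' → ℝ)
    {f : κ → Ω → ℝ} {g : κ' → Ω → ℝ} (hfg : ∀ i j, Integrable (fun ω => f i ω * g j ω) μ) :
    ∫ ω, (∑ i, a i * f i ω) * (∑ j, b j * g j ω) ∂μ
      = ∑ i, ∑ j, a i * b j * ∫ ω, f i ω * g j ω ∂μ := by
  have h : ∀ ω, (∑ i, a i * f i ω) * (∑ j, b j * g j ω)
      = ∑ p : κ × κ', a p.1 * b p.2 * (f p.1 ω * g p.2 ω) := fun ω => by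
    rw [sum_mul_sum, ← sum_product']
    exact sum_congr rfl fun p _ => by ring
  simp_rw [h]
  exact (integral_sum_mul (fun p : κ × κ' => a p.1 * b p.2) fun p => hfg p.1 p.2).trans
    (Fintype.sum_prod_type _)

structure IsStandardIndep {ι : Type*} (W : ι → Ω → ℝ) (μ : Measure Ω) : Prop where
  measurable : ∀ i, Measurable (W i)
  indep : iIndepFun W μ
  memLp_four : ∀ i, MemLp (W i) 4 μ
  integral_eq_zero : ∀ i, ∫ ω, W i ω ∂μ = 0
  integral_sq_eq_one : ∀ i, ∫ ω, W i ω ^ 2 ∂μ = 1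

namespace IsStandardIndep

variable {ι : Type*} {W : ι → Ω → ℝ}

lemma comp_injective {κ : Type*} (hW : IsStandardIndep W μ) {g : κ → ι} (hg : g.Injective) :
    IsStandardIndep (fun j => W (g j)) μ :=
  ⟨fun j => hW.measurable (g j), hW.indep.precomp hg, fun j => hW.memLp_four (g j),
    fun j => hW.integral_eq_zero (g j), fun j => hW.integral_sq_eq_one (g j)⟩

lemma integral_mul_eq_zero_of_indepFun (hW : IsStandardIndep W μ) {f : Ω → ℝ} {n : ι}
    (hf : AEStronglyMeasurable f μ) (hind : IndepFun f (W n) μ) :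
    ∫ ω, f ω * W n ω ∂μ = 0 := by
  rw [hind.integral_fun_mul_eq_mul_integral hf (hW.measurable n).aestronglyMeasurable,
    hW.integral_eq_zero, mul_zero]

lemma indepFun_mul_mul [DecidableEq ι] (hW : IsStandardIndep W μ) {k l m n : ι} (hkn : k ≠ n)
    (hln : l ≠ n) (hmn : m ≠ n) : IndepFun (fun ω => W k ω * W l ω * W m ω) (W n) μ := by
  have h := hW.indep.indepFun_finset {k, l, m} {n} (by simp [hkn.symm, hln.symm, hmn.symm])
    hW.measurable
  exact h.comp
    (φ := fun v : ({k, l, m} : Finset ι) → ℝ => v ⟨k, by simp⟩ * v ⟨l, by simp⟩ * v ⟨m, by simp⟩)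
    (ψ := fun v : ({n} : Finset ι) → ℝ => v ⟨n, by simp⟩) (by fun_prop) (by fun_prop)

lemma integral_sq_mul_sq (hW : IsStandardIndep W μ) {k l : ι} (hkl : k ≠ l) :
    ∫ ω, W k ω * W k ω * W l ω * W l ω ∂μ = 1 := by
  have h := (hW.indep.indepFun hkl).comp (measurable_id.pow_const 2) (measurable_id.pow_const 2)
  calc ∫ ω, W k ω * W k ω * W l ω * W l ω ∂μ = ∫ ω, W k ω ^ 2 * W l ω ^ 2 ∂μ := by
        congr 1 with ω
        ring
    _ = (∫ ω, W k ω ^ 2 ∂μ) * ∫ ω, W l ω ^ 2 ∂μ :=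
        h.integral_fun_mul_eq_mul_integral ((hW.measurable k).pow_const 2).aestronglyMeasurable
          ((hW.measurable l).pow_const 2).aestronglyMeasurable
    _ = 1 := by rw [hW.integral_sq_eq_one, hW.integral_sq_eq_one, one_mul]

lemma integral_mul [DecidableEq ι] (hW : IsStandardIndep W μ) (k l : ι) :
    ∫ ω, W k ω * W l ω ∂μ = (1 : Matrix ι ι ℝ) k l := by
  rcases eq_or_ne k l with rfl | hkl
  · simpa [sq] using hW.integral_sq_eq_one k
  · rw [one_apply_ne hkl]
    exact hW.integral_mul_eq_zero_of_indepFun (hW.measurable k).aestronglyMeasurable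
      (hW.indep.indepFun hkl)

variable [IsProbabilityMeasure μ]

lemma integrable (hW : IsStandardIndep W μ) (k : ι) : Integrable (W k) μ :=
  (hW.memLp_four k).integrable (by norm_num)

lemma integrable_mul (hW : IsStandardIndep W μ) (k l : ι) :
    Integrable (fun ω => W k ω * W l ω) μ := by
  simpa [Fin.prod_univ_two] using integrable_prod_of_memLp_four (by norm_num) ![W k, W l]
    (by simp [Fin.forall_fin_two, hW.memLp_four])

lemma integrable_mul_mul (hW : IsStandardIndep W μ) (k l m : ι) :
    Integrable (fun ω => W k ω * W l ω * W m ω) μ := by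
  simpa [Fin.prod_univ_three, mul_assoc] using
    integrable_prod_of_memLp_four (by norm_num) ![W k, W l, W m]
      (by simp [Fin.forall_fin_succ, hW.memLp_four])

lemma integrable_mul_mul_mul (hW : IsStandardIndep W μ) (k l m n : ι) :
    Integrable (fun ω => W k ω * W l ω * W m ω * W n ω) μ := by
  simpa [Fin.prod_univ_four, mul_assoc] using
    integrable_prod_of_memLp_four le_rfl ![W k, W l, W m, W n]
      (by simp [Fin.forall_fin_succ, hW.memLp_four])

lemma integral_mul_mul_eq_zero (hW : IsStandardIndep W μ) {k l m : ι} (hkm : k ≠ m)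
    (hlm : l ≠ m) : ∫ ω, W k ω * W l ω * W m ω ∂μ = 0 :=
  hW.integral_mul_eq_zero_of_indepFun (hW.integrable_mul k l).aestronglyMeasurable
    (hW.indep.indepFun_mul_left hW.measurable k l m hkm hlm)

lemma memLp_two_dotProduct [Fintype ι] (hW : IsStandardIndep W μ) (b : ι → ℝ) :
    MemLp (fun ω => b ⬝ᵥ (fun i => W i ω)) 2 μ := by
  simp only [dotProduct]
  exact memLp_finsetSum _ fun i _ =>
    ((hW.memLp_four i).mono_exponent (by norm_num)).const_mul (b i)

lemma memLp_two_dotProduct_mulVec [Fintype ι] (hW : IsStandardIndep W μ) (A : Matrix ι ι ℝ) :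
    MemLp (fun ω => (fun i => W i ω) ⬝ᵥ A *ᵥ (fun i => W i ω)) 2 μ := by
  simp only [dotProduct_mulVec_eq_sum_prod]
  refine memLp_finsetSum _ fun p _ => MemLp.const_mul ?_ (A p.1 p.2)
  refine (memLp_two_iff_integrable_sq (hW.integrable_mul p.1 p.2).aestronglyMeasurable).2 ?_
  simpa only [sq, mul_assoc] using hW.integrable_mul_mul_mul p.1 p.2 p.1 p.2

lemma integral_dotProduct_eq_zero [Fintype ι] (hW : IsStandardIndep W μ) (b : ι → ℝ) :
    ∫ ω, b ⬝ᵥ (fun i => W i ω) ∂μ = 0 := by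
  simp only [dotProduct]
  rw [integral_sum_mul b hW.integrable]
  simp [hW.integral_eq_zero]

variable [DecidableEq ι]

lemma integral_mul_mul_mul_eq_zero (hW : IsStandardIndep W μ) {k l m n : ι} (hkn : k ≠ n)
    (hln : l ≠ n) (hmn : m ≠ n) : ∫ ω, W k ω * W l ω * W m ω * W n ω ∂μ = 0 :=
  hW.integral_mul_eq_zero_of_indepFun (hW.integrable_mul_mul k l m).aestronglyMeasurable
    (hW.indepFun_mul_mul hkn hln hmn)

lemma integral_mul_mul (hW : IsStandardIndep W μ) (k l m : ι) :
    ∫ ω, W k ω * W l ω * W m ω ∂μ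
      = (1 : Matrix ι ι ℝ) k l * (1 : Matrix ι ι ℝ) k m * ∫ ω, W k ω ^ 3 ∂μ := by
  rcases eq_or_ne k m with rfl | hkm
  · rcases eq_or_ne k l with rfl | hkl
    · simp [pow_three, mul_assoc]
    · simp only [one_apply_ne hkl, zero_mul]
      rw [← hW.integral_mul_mul_eq_zero hkl hkl]
      congr 1 with ω
      ring
  · rw [one_apply_ne hkm, mul_zero, zero_mul]
    rcases eq_or_ne l m with rfl | hlm
    · rw [← hW.integral_mul_mul_eq_zero hkm.symm hkm.symm]
      congr 1 with ω
      ring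
    · exact hW.integral_mul_mul_eq_zero hkm hlm

lemma integral_mul_mul_mul_of_eq (hW : IsStandardIndep W μ) (k m n : ι) :
    ∫ ω, W k ω * W k ω * W m ω * W n ω ∂μ
      = (1 : Matrix ι ι ℝ) m n + 2 * ((1 : Matrix ι ι ℝ) k m * (1 : Matrix ι ι ℝ) k n)
        + (∫ ω, W k ω ^ 4 ∂μ - 3) * ((1 : Matrix ι ι ℝ) k m * (1 : Matrix ι ι ℝ) k n) := by
  rcases eq_or_ne m n with rfl | hmn
  · rcases eq_or_ne k m with rfl | hkm
    · rw [show (fun ω => W k ω * W k ω * W k ω * W k ω) = fun ω => W k ω ^ 4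
        from funext fun ω => by ring]
      simp only [one_apply_eq]
      ring
    · rw [hW.integral_sq_mul_sq hkm]
      simp [one_apply_ne hkm]
  · rcases eq_or_ne k n with rfl | hkn
    · rw [show (fun ω => W k ω * W k ω * W m ω * W k ω) = fun ω => W k ω * W k ω * W k ω * W m ω
        from funext fun ω => by ring, hW.integral_mul_mul_mul_eq_zero hmn.symm hmn.symm hmn.symm]
      simp [one_apply_ne hmn, one_apply_ne hmn.symm]
    · rw [hW.integral_mul_mul_mul_eq_zero hkn hkn hmn]
      simp [one_apply_ne hkn, one_apply_ne hmn]

lemma integral_mul_mul_mul_of_ne (hW : IsStandardIndep W μ) {k l : ι} (hkl : k ≠ l) (m n : ι) :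
    ∫ ω, W k ω * W l ω * W m ω * W n ω ∂μ
      = (1 : Matrix ι ι ℝ) k m * (1 : Matrix ι ι ℝ) l n
        + (1 : Matrix ι ι ℝ) k n * (1 : Matrix ι ι ℝ) l m := by
  rcases eq_or_ne k m with rfl | hkm
  · rcases eq_or_ne l n with rfl | hln
    · rw [show (fun ω => W k ω * W l ω * W k ω * W l ω) = fun ω => W k ω * W k ω * W l ω * W l ω
        from funext fun ω => by ring, hW.integral_sq_mul_sq hkl]
      simp [one_apply_ne hkl]
    · rw [show (fun ω => W k ω * W l ω * W k ω * W n ω) = fun ω => W k ω * W k ω * W n ω * W l ω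
        from funext fun ω => by ring, hW.integral_mul_mul_mul_eq_zero hkl hkl hln.symm]
      simp [one_apply_ne hkl.symm, one_apply_ne hln]
  · rcases eq_or_ne k n with rfl | hkn
    · rcases eq_or_ne l m with rfl | hlm
      · rw [show (fun ω => W k ω * W l ω * W l ω * W k ω) = fun ω => W k ω * W k ω * W l ω * W l ω
          from funext fun ω => by ring, hW.integral_sq_mul_sq hkl]
        simp [one_apply_ne hkl]
      · rw [show (fun ω => W k ω * W l ω * W m ω * W k ω) = fun ω => W k ω * W m ω * W k ω * W l ω
          from funext fun ω => by ring, hW.integral_mul_mul_mul_eq_zero hkl hlm.symm hkl]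
        simp [one_apply_ne hkm, one_apply_ne hlm]
    · rw [show (fun ω => W k ω * W l ω * W m ω * W n ω) = fun ω => W l ω * W m ω * W n ω * W k ω
        from funext fun ω => by ring, hW.integral_mul_mul_mul_eq_zero hkl.symm hkm.symm hkn.symm]
      simp [one_apply_ne hkm, one_apply_ne hkn]

lemma integral_mul_mul_mul (hW : IsStandardIndep W μ) (k l m n : ι) :
    ∫ ω, W k ω * W l ω * W m ω * W n ω ∂μ
      = (1 : Matrix ι ι ℝ) k l * (1 : Matrix ι ι ℝ) m n
        + (1 : Matrix ι ι ℝ) k m * (1 : Matrix ι ι ℝ) l n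
        + (1 : Matrix ι ι ℝ) k n * (1 : Matrix ι ι ℝ) l m
        + (∫ ω, W k ω ^ 4 ∂μ - 3)
          * ((1 : Matrix ι ι ℝ) k l * (1 : Matrix ι ι ℝ) k m * (1 : Matrix ι ι ℝ) k n) := by
  rcases eq_or_ne k l with rfl | hkl
  · rw [hW.integral_mul_mul_mul_of_eq]
    simp only [one_apply_eq]
    ring
  · rw [hW.integral_mul_mul_mul_of_ne hkl, one_apply_ne hkl]
    ring

variable [Fintype ι]

lemma integral_dotProduct_sq (hW : IsStandardIndep W μ) (b : ι → ℝ) :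
    ∫ ω, (b ⬝ᵥ (fun i => W i ω)) ^ 2 ∂μ = b ⬝ᵥ b := by
  simp only [dotProduct, sq]
  rw [integral_sum_mul_sum b b hW.integrable_mul]
  simp [hW.integral_mul, one_apply]

lemma integral_dotProduct_mulVec (hW : IsStandardIndep W μ) (A : Matrix ι ι ℝ) :
    ∫ ω, (fun i => W i ω) ⬝ᵥ A *ᵥ (fun i => W i ω) ∂μ = A.trace := by
  simp only [dotProduct_mulVec_eq_sum_prod]
  rw [integral_sum_mul (fun p : ι × ι => A p.1 p.2) fun p => hW.integrable_mul p.1 p.2]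
  simp [hW.integral_mul, Fintype.sum_prod_type, one_apply, trace]

lemma integral_dotProduct_mulVec_mul_dotProduct (hW : IsStandardIndep W μ) (A : Matrix ι ι ℝ)
    (b : ι → ℝ) :
    ∫ ω, ((fun i => W i ω) ⬝ᵥ A *ᵥ (fun i => W i ω)) * (b ⬝ᵥ (fun i => W i ω)) ∂μ
      = ∑ k, A k k * b k * ∫ ω, W k ω ^ 3 ∂μ := by
  simp only [dotProduct_mulVec_eq_sum_prod]
  simp only [dotProduct]
  rw [integral_sum_mul_sum (fun p : ι × ι => A p.1 p.2) b
    fun p m => hW.integrable_mul_mul p.1 p.2 m]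
  simp [hW.integral_mul_mul, Fintype.sum_prod_type, one_apply]

lemma integral_dotProduct_mulVec_sq (hW : IsStandardIndep W μ) (A : Matrix ι ι ℝ) :
    ∫ ω, ((fun i => W i ω) ⬝ᵥ A *ᵥ (fun i => W i ω)) ^ 2 ∂μ
      = A.trace ^ 2 + (A * Aᵀ).trace + (A * A).trace
        + ∑ k, (∫ ω, W k ω ^ 4 ∂μ - 3) * A k k ^ 2 := by
  simp only [dotProduct_mulVec_eq_sum_prod, sq]
  rw [integral_sum_mul_sum (fun p : ι × ι => A p.1 p.2) (fun p : ι × ι => A p.1 p.2)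
    fun p q => by simpa only [mul_assoc] using hW.integrable_mul_mul_mul p.1 p.2 q.1 q.2]
  simp only [← mul_assoc, hW.integral_mul_mul_mul, Fintype.sum_prod_type]
  simp only [one_apply, mul_ite, mul_one, mul_zero, mul_add, sum_add_distrib, sum_ite_eq, mem_univ,
    ↓reduceIte, sum_ite_irrel, sum_const_zero, trace, diag_apply, sum_mul_sum, mul_apply,
    transpose_apply, add_right_inj]
  exact sum_congr rfl fun k _ => by ring

theorem integral_mulVec_add_dotProduct_self_sq {m : Type*} [Fintype m]
    (hW : IsStandardIndep W μ) (M : Matrix m ι ℝ) (δ : m → ℝ) :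
    ∫ ω, ((M *ᵥ (fun i => W i ω) + δ) ⬝ᵥ (M *ᵥ (fun i => W i ω) + δ)) ^ 2 ∂μ
      = ((Mᵀ * M).trace + δ ⬝ᵥ δ) ^ 2 + 2 * ((Mᵀ * M) ^ 2).trace
        + ∑ k, (∫ ω, W k ω ^ 4 ∂μ - 3) * (Mᵀ * M) k k ^ 2 + 4 * (Mᵀ *ᵥ δ) ⬝ᵥ (Mᵀ *ᵥ δ)
        + 4 * ∑ k, (Mᵀ * M) k k * (Mᵀ *ᵥ δ) k * ∫ ω, W k ω ^ 3 ∂μ := by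
  set Q := fun ω => (fun i => W i ω) ⬝ᵥ (Mᵀ * M) *ᵥ (fun i => W i ω)
  set L := fun ω => (Mᵀ *ᵥ δ) ⬝ᵥ (fun i => W i ω)
  have hQ := hW.memLp_two_dotProduct_mulVec (Mᵀ * M)
  have hL := hW.memLp_two_dotProduct (Mᵀ *ᵥ δ)
  have hQQ : Integrable (fun ω => Q ω ^ 2) μ := hQ.integrable_sq
  have hQL : Integrable (fun ω => Q ω * L ω) μ := hQ.integrable_mul hL
  have hLL : Integrable (fun ω => L ω ^ 2) μ := hL.integrable_sq
  have hQ1 : Integrable Q μ := hQ.integrable one_le_two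
  have hL1 : Integrable L μ := hL.integrable one_le_two
  have hexpand : ∀ ω, ((M *ᵥ (fun i => W i ω) + δ) ⬝ᵥ (M *ᵥ (fun i => W i ω) + δ)) ^ 2
      = Q ω ^ 2 + 4 * (Q ω * L ω) + 4 * L ω ^ 2 + 2 * (δ ⬝ᵥ δ) * Q ω
        + 4 * (δ ⬝ᵥ δ) * L ω + (δ ⬝ᵥ δ) ^ 2 := fun ω => by
    rw [mulVec_add_dotProduct_mulVec_add]
    ring
  simp_rw [hexpand]
  rw [integral_add, integral_add, integral_add, integral_add, integral_add] <;> try fun_prop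
  simp only [integral_const_mul, integral_const, probReal_univ, one_smul]
  rw [hW.integral_dotProduct_mulVec_sq, hW.integral_dotProduct_mulVec_mul_dotProduct,
    hW.integral_dotProduct_sq, hW.integral_dotProduct_mulVec, hW.integral_dotProduct_eq_zero,
    transpose_mul, transpose_transpose, sq (Mᵀ * M)]
  ring

end IsStandardIndep

theorem IsStandardIndep.integral_mulVec_sub_mulVec_add_dotProduct_self_sq {ι m : Type*}
    [Fintype ι] [DecidableEq ι] [Fintype m] [DecidableEq m] [IsProbabilityMeasure μ]
    {W : ι ⊕ ι → Ω → ℝ} (hW : IsStandardIndep W μ)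
    (h3 : ∀ k, ∫ ω, W (.inl k) ω ^ 3 ∂μ = ∫ ω, W (.inr k) ω ^ 3 ∂μ)
    (Γ : Matrix m ι ℝ) (δ : m → ℝ) :
    ∫ ω, ((Γ *ᵥ (fun k => W (.inl k) ω) - Γ *ᵥ (fun k => W (.inr k) ω) + δ)
        ⬝ᵥ (Γ *ᵥ (fun k => W (.inl k) ω) - Γ *ᵥ (fun k => W (.inr k) ω) + δ)) ^ 2 ∂μ
      = 8 * ((Γ * Γᵀ) ^ 2).trace
        + ∑ k, (∫ ω, W (.inl k) ω ^ 4 ∂μ + ∫ ω, W (.inr k) ω ^ 4 ∂μ - 6) * (Γᵀ * Γ) k k ^ 2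
        + 8 * (δ ⬝ᵥ (Γ * Γᵀ) *ᵥ δ) + (2 * (Γ * Γᵀ).trace + δ ⬝ᵥ δ) ^ 2 := by
  have hgram : (fromCols Γ (-Γ))ᵀ * fromCols Γ (-Γ)
      = fromBlocks (Γᵀ * Γ) (-(Γᵀ * Γ)) (-(Γᵀ * Γ)) (Γᵀ * Γ) := by
    simp [transpose_fromCols]
  have hproj : (fromCols Γ (-Γ))ᵀ *ᵥ δ = Sum.elim (Γᵀ *ᵥ δ) (-(Γᵀ *ᵥ δ)) := by
    simp [transpose_fromCols, fromRows_mulVec, neg_mulVec]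
  have h := hW.integral_mulVec_add_dotProduct_self_sq (fromCols Γ (-Γ)) δ
  simp only [fromCols_mulVec, neg_mulVec, ← sub_eq_add_neg, Function.comp_def] at h
  rw [h, hgram, hproj, sq (fromBlocks _ _ _ _), fromBlocks_multiply,
    trace_fromBlocks, trace_fromBlocks, ← trace_transpose_mul_self_sq,
    ← trace_mul_comm Γᵀ Γ]
  simp only [Fintype.sum_sum_type, fromBlocks_apply₁₁, fromBlocks_apply₂₂,
    Sum.elim_inl, Sum.elim_inr, sumElim_dotProduct_sumElim, neg_neg, trace_add,
    Pi.neg_apply, neg_dotProduct, dotProduct_neg, mul_neg, neg_mul, h3]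
  rw [← sum_add_distrib, ← sum_add_distrib, mulVec_dotProduct_mulVec Γᵀ,
    transpose_transpose]
  simp only [add_neg_cancel, sum_const_zero, ← sq, ← add_mul,
    show ∀ a b : ℝ, a - 3 + (b - 3) = a + b - 6 from fun _ _ => by ring]
  ring

end

/-- With `X = ΓZ₁ + μ₁`, `Y = ΓZ₂ + μ₂`, where the `2D` coordinates of `Z₁, Z₂` are i.i.d.
with mean 0, variance 1 and fourth moment `3 + Δ₄`, and `ΓΓᵀ = S`, `δ = μ₁ − μ₂`:
`E‖X − Y‖⁴ = 8·Tr(S²) + 2Δ₄·∑ₖ ((ΓᵀΓ)ₖₖ)² + 8·δᵀSδ + (2·Tr(S) + ‖δ‖²)²`. -/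
theorem expected_fourth_dist {Ω : Type*} [MeasurableSpace Ω] (μ : Measure Ω)
    [IsProbabilityMeasure μ] {d D : ℕ}
    (Γ : Matrix (Fin d) (Fin D) ℝ) (S : Matrix (Fin d) (Fin d) ℝ)
    (hΓ : Γ * Γ.transpose = S)
    (Z₁ Z₂ : Ω → Fin D → ℝ)
    (hmeas : ∀ p : Fin 2 × Fin D, Measurable fun ω => ![Z₁ ω, Z₂ ω] p.1 p.2)
    (hindep : iIndepFun
      (fun p : Fin 2 × Fin D => fun ω => ![Z₁ ω, Z₂ ω] p.1 p.2) μ)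
    (hident : ∀ p q : Fin 2 × Fin D,
      IdentDistrib (fun ω => ![Z₁ ω, Z₂ ω] p.1 p.2) (fun ω => ![Z₁ ω, Z₂ ω] q.1 q.2) μ μ)
    (Δ₄ : ℝ)
    (hmean : ∀ p : Fin 2 × Fin D, ∫ ω, ![Z₁ ω, Z₂ ω] p.1 p.2 ∂μ = 0)
    (hvar : ∀ p : Fin 2 × Fin D, ∫ ω, (![Z₁ ω, Z₂ ω] p.1 p.2) ^ 2 ∂μ = 1)
    (hL4 : ∀ p : Fin 2 × Fin D, Integrable (fun ω => (![Z₁ ω, Z₂ ω] p.1 p.2) ^ 4) μ)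
    (hm4 : ∀ p : Fin 2 × Fin D, ∫ ω, (![Z₁ ω, Z₂ ω] p.1 p.2) ^ 4 ∂μ = 3 + Δ₄)
    (μ₁ μ₂ : Fin d → ℝ) (X Y : Ω → Fin d → ℝ)
    (hX : ∀ ω, X ω = Γ.mulVec (Z₁ ω) + μ₁)
    (hY : ∀ ω, Y ω = Γ.mulVec (Z₂ ω) + μ₂)
    (δ : Fin d → ℝ) (hδ : δ = μ₁ - μ₂) :
    ∫ ω, (∑ i, (X ω i - Y ω i) ^ 2) ^ 2 ∂μ
      = 8 * (S ^ 2).trace + 2 * Δ₄ * (∑ k, ((Γ.transpose * Γ) k k) ^ 2)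
        + 8 * (δ ⬝ᵥ S.mulVec δ) + (2 * S.trace + ∑ i, (δ i) ^ 2) ^ 2 := by
  have hV : IsStandardIndep (fun p : Fin 2 × Fin D => fun ω => ![Z₁ ω, Z₂ ω] p.1 p.2) μ :=
    ⟨hmeas, hindep,
      fun p => memLp_four_of_integrable_pow_four (hmeas p).aestronglyMeasurable (hL4 p),
      hmean, hvar⟩
  have hW : IsStandardIndep (Sum.elim (fun k ω => Z₁ ω k) (fun k ω => Z₂ ω k)) μ := by
    convert hV.comp_injective (g := Sum.elim (Prod.mk 0) (Prod.mk 1))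
      (by rintro (k | k) (l | l) h <;> simp_all) using 1
    ext (k | k) <;> rfl
  have h3 : ∀ k, ∫ ω, Z₁ ω k ^ 3 ∂μ = ∫ ω, Z₂ ω k ^ 3 ∂μ := fun k =>
    ((hident (0, k) (1, k)).comp (measurable_id.pow_const 3)).integral_eq
  have h4 : ∀ k, ∫ ω, Z₁ ω k ^ 4 ∂μ + ∫ ω, Z₂ ω k ^ 4 ∂μ - 6 = 2 * Δ₄ := fun k => by
    rw [show ∫ ω, Z₁ ω k ^ 4 ∂μ = 3 + Δ₄ from hm4 (0, k),
      show ∫ ω, Z₂ ω k ^ 4 ∂μ = 3 + Δ₄ from hm4 (1, k)]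
    ring
  have hdist : ∀ ω, ∑ i, (X ω i - Y ω i) ^ 2
      = (Γ *ᵥ Z₁ ω - Γ *ᵥ Z₂ ω + δ) ⬝ᵥ (Γ *ᵥ Z₁ ω - Γ *ᵥ Z₂ ω + δ) := fun ω => by
    simp only [dotProduct, hX, hY, hδ, Pi.add_apply, Pi.sub_apply, sq]
    exact sum_congr rfl fun i _ => by ring
  simp_rw [hdist, ← hΓ]
  refine (hW.integral_mulVec_sub_mulVec_add_dotProduct_self_sq h3 Γ δ).trans ?_
  simp only [Sum.elim_inl, Sum.elim_inr, h4, dotProduct, mul_sum, sq]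
end

section
/- Let Γ be a deterministic real d×D matrix with ΓΓᵀ = Σ, and let Z₁, Z₂, Z₃, Z₄ be independent random vectors in ℝ^D whose 4D coordinates are all i.i.d. with mean 0, variance 1, and finite fourth moment. Set X = ΓZ₁ + μ₁, X' = ΓZ₂ + μ₁, Y = ΓZ₃ + μ₂, Y' = ΓZ₄ + μ₂, and δ := μ₁ − μ₂. Define h₄ := ‖X−X'‖⁴ + ‖Y−Y'‖⁴ − ‖X−Y'‖⁴ − ‖X'−Y‖⁴. Then E[h₄] = −16·δᵀΣδ − 8·‖δ‖²·Tr(Σ) − 2·‖δ‖⁴. -/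
open MeasureTheory ProbabilityTheory Matrix

set_option linter.unusedSectionVars false
section Aux
variable {Ω : Type*} [MeasurableSpace Ω] {μ : Measure Ω} [IsProbabilityMeasure μ]

private lemma aux_int_mul4 {f g h k : Ω → ℝ} (hf : Measurable f) (hg : Measurable g)
    (hh : Measurable h) (hk : Measurable k)
    (h4f : Integrable (fun ω => f ω ^ 4) μ) (h4g : Integrable (fun ω => g ω ^ 4) μ)
    (h4h : Integrable (fun ω => h ω ^ 4) μ) (h4k : Integrable (fun ω => k ω ^ 4) μ) :
    Integrable (fun ω => f ω * g ω * h ω * k ω) μ := by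
  have hb : Integrable (fun ω => (f ω ^ 4 + g ω ^ 4 + h ω ^ 4 + k ω ^ 4) / 4) μ :=
    (((h4f.add h4g).add h4h).add h4k).div_const 4
  refine hb.mono' (((hf.mul hg).mul hh).mul hk).aestronglyMeasurable ?_
  filter_upwards with ω
  rw [Real.norm_eq_abs, abs_le]
  constructor
  · nlinarith [sq_nonneg (f ω * g ω + h ω * k ω), sq_nonneg (f ω ^ 2 - g ω ^ 2),
      sq_nonneg (h ω ^ 2 - k ω ^ 2)]
  · nlinarith [sq_nonneg (f ω * g ω - h ω * k ω), sq_nonneg (f ω ^ 2 - g ω ^ 2),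
      sq_nonneg (h ω ^ 2 - k ω ^ 2)]

private lemma aux_int_mul3 {f g h : Ω → ℝ} (hf : Measurable f) (hg : Measurable g)
    (hh : Measurable h)
    (h4f : Integrable (fun ω => f ω ^ 4) μ) (h4g : Integrable (fun ω => g ω ^ 4) μ)
    (h4h : Integrable (fun ω => h ω ^ 4) μ) :
    Integrable (fun ω => f ω * g ω * h ω) μ := by
  have h1 : Integrable (fun _ : Ω => (1 : ℝ) ^ 4) μ := by simpa using integrable_const (1 : ℝ)
  simpa using aux_int_mul4 (k := fun _ => (1 : ℝ)) hf hg hh measurable_const h4f h4g h4h h1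

private lemma aux_int_mul2 {f g : Ω → ℝ} (hf : Measurable f) (hg : Measurable g)
    (h4f : Integrable (fun ω => f ω ^ 4) μ) (h4g : Integrable (fun ω => g ω ^ 4) μ) :
    Integrable (fun ω => f ω * g ω) μ := by
  have h1 : Integrable (fun _ : Ω => (1 : ℝ) ^ 4) μ := by simpa using integrable_const (1 : ℝ)
  simpa using aux_int_mul3 (h := fun _ => (1 : ℝ)) hf hg measurable_const h4f h4g h1

private lemma aux_int1 {f : Ω → ℝ} (hf : Measurable f)
    (h4f : Integrable (fun ω => f ω ^ 4) μ) : Integrable f μ := by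
  have h1 : Integrable (fun _ : Ω => (1 : ℝ) ^ 4) μ := by simpa using integrable_const (1 : ℝ)
  simpa using aux_int_mul2 (g := fun _ => (1 : ℝ)) hf measurable_const h4f h1

end Aux

section Aux2
variable {Ω : Type*} [MeasurableSpace Ω] {μ : Measure Ω} [IsProbabilityMeasure μ]

private lemma aux_L4_add {f g : Ω → ℝ} (hf : Measurable f) (hg : Measurable g)
    (h4f : Integrable (fun ω => f ω ^ 4) μ) (h4g : Integrable (fun ω => g ω ^ 4) μ) :
    Integrable (fun ω => (f ω + g ω) ^ 4) μ := by
  have hb : Integrable (fun ω => 8 * f ω ^ 4 + 8 * g ω ^ 4) μ :=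
    (h4f.const_mul 8).add (h4g.const_mul 8)
  refine hb.mono' ((hf.add hg).pow_const 4).aestronglyMeasurable ?_
  filter_upwards with ω
  rw [Real.norm_eq_abs, abs_of_nonneg (by positivity)]
  have h1 : (f ω + g ω) ^ 2 ≤ 2 * f ω ^ 2 + 2 * g ω ^ 2 := by nlinarith [sq_nonneg (f ω - g ω)]
  have h2 : (f ω + g ω) ^ 4 = ((f ω + g ω) ^ 2) ^ 2 := by ring
  nlinarith [sq_nonneg (f ω ^ 2 - g ω ^ 2), sq_nonneg (f ω + g ω), sq_nonneg (f ω ^ 2 + g ω ^ 2)]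


private lemma aux_L4_sub {f g : Ω → ℝ} (hf : Measurable f) (hg : Measurable g)
    (h4f : Integrable (fun ω => f ω ^ 4) μ) (h4g : Integrable (fun ω => g ω ^ 4) μ) :
    Integrable (fun ω => (f ω - g ω) ^ 4) μ := by
  have h4g' : Integrable (fun ω => (-g ω) ^ 4) μ := by
    have e : (fun ω => (-g ω) ^ 4) = fun ω => g ω ^ 4 := funext fun ω => by ring
    rw [e]; exact h4g
  have := aux_L4_add hf hg.neg h4f h4g'
  simpa [sub_eq_add_neg] using this

private lemma aux_L4_sum {ι : Type*} (s : Finset ι) (f : ι → Ω → ℝ)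
    (hm : ∀ i ∈ s, Measurable (f i))
    (h4 : ∀ i ∈ s, Integrable (fun ω => f i ω ^ 4) μ) :
    Integrable (fun ω => (∑ i ∈ s, f i ω) ^ 4) μ := by
  classical
  induction s using Finset.cons_induction with
  | empty => simpa using integrable_const (0 : ℝ)
  | cons a s ha ih =>
    have := aux_L4_add (hm a (Finset.mem_cons_self a s))
      (Finset.measurable_sum s fun i hi => hm i (Finset.mem_cons_of_mem hi))
      (h4 a (Finset.mem_cons_self a s))
      (ih (fun i hi => hm i (Finset.mem_cons_of_mem hi))
        (fun i hi => h4 i (Finset.mem_cons_of_mem hi)))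
    simpa [Finset.sum_cons, Finset.sum_insert ha] using this

private lemma aux_msum {ι : Type*} (s : Finset ι) (f : ι → Ω → ℝ)
    (hm : ∀ i ∈ s, Measurable (f i)) : Measurable (fun ω => ∑ i ∈ s, f i ω) :=
  Finset.measurable_sum s hm

/-- Integrability of `(∑ i (∑ j Γ i j W j + δ i)^2)^2` for an L⁴ family `W`. -/
private lemma aux_intQ {d D : ℕ} (Γ : Matrix (Fin d) (Fin D) ℝ) (δ : Fin d → ℝ)
    (W : Fin D → Ω → ℝ) (hWm : ∀ j, Measurable (W j))
    (hW4 : ∀ j, Integrable (fun ω => W j ω ^ 4) μ) :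
    Integrable (fun ω => (∑ i, (∑ j, Γ i j * W j ω + δ i) ^ 2) ^ 2) μ := by
  set g : Fin d → Ω → ℝ := fun i ω => ∑ j, Γ i j * W j ω + δ i with hg
  have hgm : ∀ i, Measurable (g i) := fun i =>
    (Finset.measurable_sum _ fun j _ => (hWm j).const_mul _).add measurable_const
  have hg4 : ∀ i, Integrable (fun ω => g i ω ^ 4) μ := by
    intro i
    have h1 : Integrable (fun ω => (∑ j, Γ i j * W j ω) ^ 4) μ := by
      refine aux_L4_sum _ _ (fun j _ => (hWm j).const_mul _) (fun j _ => ?_)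
      simpa [mul_pow] using (hW4 j).const_mul (Γ i j ^ 4)
    have h2 : Integrable (fun _ : Ω => (δ i) ^ 4) μ := integrable_const _
    exact aux_L4_add (Finset.measurable_sum _ fun j _ => (hWm j).const_mul _)
      measurable_const h1 h2
  have key : (fun ω => (∑ i, g i ω ^ 2) ^ 2)
      = fun ω => ∑ i, ∑ k, g i ω * g i ω * (g k ω * g k ω) := by
    funext ω
    rw [sq, Finset.sum_mul_sum]
    exact Finset.sum_congr rfl fun i _ => Finset.sum_congr rfl fun k _ => by ring
  have : Integrable (fun ω => (∑ i, g i ω ^ 2) ^ 2) μ := by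
    rw [key]
    exact integrable_finset_sum _ fun i _ => integrable_finset_sum _ fun k _ => by
      simpa [mul_assoc] using aux_int_mul4 (hgm i) (hgm i) (hgm k) (hgm k)
        (hg4 i) (hg4 i) (hg4 k) (hg4 k)
  exact this

end Aux2

section Aux3
variable {Ω : Type*} [MeasurableSpace Ω] {μ : Measure Ω} [IsProbabilityMeasure μ] {D : ℕ}

private lemma aux_sum1 (W : Fin D → Ω → ℝ) (hW1 : ∀ j, Integrable (W j) μ)
    (hE1 : ∀ j, ∫ ω, W j ω ∂μ = 0) (c : Fin D → ℝ) :
    ∫ ω, ∑ j, c j * W j ω ∂μ = 0 := by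
  rw [integral_finset_sum _ fun j _ => (hW1 j).const_mul _]
  simp [integral_const_mul, hE1]

private lemma aux_sum2 (W : Fin D → Ω → ℝ)
    (hint2 : ∀ j k, Integrable (fun ω => W j ω * W k ω) μ)
    (hE2 : ∀ j k, ∫ ω, W j ω * W k ω ∂μ = if j = k then 2 else 0) (c e : Fin D → ℝ) :
    ∫ ω, (∑ j, c j * W j ω) * (∑ k, e k * W k ω) ∂μ = 2 * ∑ j, c j * e j := by
  have key : (fun ω => (∑ j, c j * W j ω) * (∑ k, e k * W k ω))
      = fun ω => ∑ j, ∑ k, (c j * e k) * (W j ω * W k ω) := by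
    funext ω
    rw [Finset.sum_mul_sum]
    exact Finset.sum_congr rfl fun j _ => Finset.sum_congr rfl fun k _ => by ring
  rw [key, integral_finset_sum _ fun j _ => integrable_finset_sum _ fun k _ =>
    (hint2 j k).const_mul _]
  have : ∀ j, ∫ ω, ∑ k, (c j * e k) * (W j ω * W k ω) ∂μ = 2 * (c j * e j) := by
    intro j
    rw [integral_finset_sum _ fun k _ => (hint2 j k).const_mul _]
    have : ∀ k, ∫ ω, (c j * e k) * (W j ω * W k ω) ∂μ
        = (c j * e k) * if j = k then 2 else 0 := by
      intro k; rw [integral_const_mul, hE2]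
    simp only [this]
    rw [Finset.sum_eq_single j]
    · simp; ring
    · intro k _ hk; simp [Ne.symm hk]
    · simp
  simp only [this, ← Finset.mul_sum]

private lemma aux_sum3 (W : Fin D → Ω → ℝ)
    (hint3 : ∀ j k l, Integrable (fun ω => W j ω * W k ω * W l ω) μ)
    (hE3 : ∀ j k l, ∫ ω, W j ω * W k ω * W l ω ∂μ = 0) (c e f : Fin D → ℝ) :
    ∫ ω, (∑ j, c j * W j ω) * (∑ k, e k * W k ω) * (∑ l, f l * W l ω) ∂μ = 0 := by
  have key : (fun ω => (∑ j, c j * W j ω) * (∑ k, e k * W k ω) * (∑ l, f l * W l ω))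
      = fun ω => ∑ j, ∑ k, ∑ l, (c j * e k * f l) * (W j ω * W k ω * W l ω) := by
    funext ω
    rw [Finset.sum_mul_sum, Finset.sum_mul]
    refine Finset.sum_congr rfl fun j _ => ?_
    rw [Finset.sum_mul]
    refine Finset.sum_congr rfl fun k _ => ?_
    rw [Finset.mul_sum]
    exact Finset.sum_congr rfl fun l _ => by ring
  rw [key, integral_finset_sum _ fun j _ => integrable_finset_sum _ fun k _ =>
    integrable_finset_sum _ fun l _ => (hint3 j k l).const_mul _]
  have : ∀ j, ∫ ω, ∑ k, ∑ l, (c j * e k * f l) * (W j ω * W k ω * W l ω) ∂μ = 0 := by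
    intro j
    rw [integral_finset_sum _ fun k _ => integrable_finset_sum _ fun l _ =>
      (hint3 j k l).const_mul _]
    refine Finset.sum_eq_zero fun k _ => ?_
    rw [integral_finset_sum _ fun l _ => (hint3 j k l).const_mul _]
    refine Finset.sum_eq_zero fun l _ => ?_
    rw [integral_const_mul, hE3, mul_zero]
  simp [this]

end Aux3

section Aux4
variable {Ω : Type*} [MeasurableSpace Ω] {μ : Measure Ω} [IsProbabilityMeasure μ]

private lemma aux_intP {d D : ℕ} (Γ : Matrix (Fin d) (Fin D) ℝ)
    (W : Fin D → Ω → ℝ) (hWm : ∀ j, Measurable (W j))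
    (hW4 : ∀ j, Integrable (fun ω => W j ω ^ 4) μ) :
    Integrable (fun ω => (∑ i, (∑ j, Γ i j * W j ω) ^ 2) ^ 2) μ := by
  simpa using aux_intQ Γ (fun _ => 0) W hWm hW4

private lemma aux_pair {d D : ℕ} (Γ : Matrix (Fin d) (Fin D) ℝ) (δ : Fin d → ℝ)
    (W : Fin D → Ω → ℝ)
    (hWm : ∀ j, Measurable (W j))
    (hW4 : ∀ j, Integrable (fun ω => W j ω ^ 4) μ)
    (hE1 : ∀ j, ∫ ω, W j ω ∂μ = 0)
    (hE2 : ∀ j k, ∫ ω, W j ω * W k ω ∂μ = if j = k then 2 else 0)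
    (hE3 : ∀ j k l, ∫ ω, W j ω * W k ω * W l ω ∂μ = 0) :
    ∫ ω, (∑ i, (∑ j, Γ i j * W j ω + δ i) ^ 2) ^ 2 ∂μ
      = (∫ ω, (∑ i, (∑ j, Γ i j * W j ω) ^ 2) ^ 2 ∂μ)
        + 8 * (∑ j, (∑ i, δ i * Γ i j) ^ 2)
        + 4 * (∑ i, δ i ^ 2) * (∑ i, ∑ j, Γ i j ^ 2) + (∑ i, δ i ^ 2) ^ 2 := by
  classical
  set T : Fin D → ℝ := fun j => ∑ i, δ i * Γ i j with hT
  set c : ℝ := ∑ i, δ i ^ 2 with hc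
  have hWint : ∀ j, Integrable (W j) μ := fun j => aux_int1 (hWm j) (hW4 j)
  have hWint2 : ∀ j k, Integrable (fun ω => W j ω * W k ω) μ := fun j k =>
    aux_int_mul2 (hWm j) (hWm k) (hW4 j) (hW4 k)
  have hWint3 : ∀ j k l, Integrable (fun ω => W j ω * W k ω * W l ω) μ := fun j k l =>
    aux_int_mul3 (hWm j) (hWm k) (hWm l) (hW4 j) (hW4 k) (hW4 l)
  have hSm : ∀ cf : Fin D → ℝ, Measurable (fun ω => ∑ j, cf j * W j ω) := fun cf =>
    Finset.measurable_sum _ fun j _ => (hWm j).const_mul _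
  have hSL4 : ∀ cf : Fin D → ℝ, Integrable (fun ω => (∑ j, cf j * W j ω) ^ 4) μ := fun cf =>
    aux_L4_sum _ _ (fun j _ => (hWm j).const_mul _)
      (fun j _ => by simpa [mul_pow] using (hW4 j).const_mul (cf j ^ 4))
  have hS2 : ∀ cf ef : Fin D → ℝ,
      Integrable (fun ω => (∑ j, cf j * W j ω) * (∑ j, ef j * W j ω)) μ := fun cf ef =>
    aux_int_mul2 (hSm cf) (hSm ef) (hSL4 cf) (hSL4 ef)
  have hS3 : ∀ cf ef ff : Fin D → ℝ,
      Integrable (fun ω => (∑ j, cf j * W j ω) * (∑ j, ef j * W j ω)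
        * (∑ j, ff j * W j ω)) μ := fun cf ef ff =>
    aux_int_mul3 (hSm cf) (hSm ef) (hSm ff) (hSL4 cf) (hSL4 ef) (hSL4 ff)
  have hSsq : ∀ cf : Fin D → ℝ, Integrable (fun ω => (∑ j, cf j * W j ω) ^ 2) μ := by
    intro cf
    rw [show (fun ω => (∑ j, cf j * W j ω) ^ 2)
      = fun ω => (∑ j, cf j * W j ω) * (∑ j, cf j * W j ω) from funext fun ω => pow_two _]
    exact hS2 cf cf
  -- `s` in `T`-form, pointwise
  have hsT : ∀ ω, ∑ i, δ i * (∑ j, Γ i j * W j ω) = ∑ j, T j * W j ω := by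
    intro ω
    simp only [Finset.mul_sum]
    rw [Finset.sum_comm]
    exact Finset.sum_congr rfl fun j _ => by rw [hT, Finset.sum_mul]
                                             exact Finset.sum_congr rfl fun i _ => by ring
  have hsTfun : (fun ω => ∑ i, δ i * (∑ j, Γ i j * W j ω)) = fun ω => ∑ j, T j * W j ω :=
    funext hsT
  have hssfun : (fun ω => (∑ i, δ i * (∑ j, Γ i j * W j ω))
      * (∑ i, δ i * (∑ j, Γ i j * W j ω)))
      = fun ω => (∑ j, T j * W j ω) * (∑ j, T j * W j ω) := funext fun ω => by rw [hsT ω]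
  -- integral values
  have hIs : ∫ ω, ∑ i, δ i * (∑ j, Γ i j * W j ω) ∂μ = 0 := by
    rw [hsTfun]; exact aux_sum1 W hWint hE1 T
  have hIs2 : ∫ ω, (∑ i, δ i * (∑ j, Γ i j * W j ω))
      * (∑ i, δ i * (∑ j, Γ i j * W j ω)) ∂μ = 2 * ∑ j, T j * T j := by
    rw [hssfun]; exact aux_sum2 W hWint2 hE2 T T
  have hIq : ∫ ω, ∑ i, (∑ j, Γ i j * W j ω) ^ 2 ∂μ = 2 * ∑ i, ∑ j, Γ i j ^ 2 := by
    rw [integral_finset_sum _ (fun i _ => hSsq (Γ i))]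
    simp only [pow_two]
    have hIqi : ∀ i, ∫ ω, (∑ j, Γ i j * W j ω) * (∑ j, Γ i j * W j ω) ∂μ
        = 2 * ∑ j, Γ i j * Γ i j := fun i => aux_sum2 W hWint2 hE2 (Γ i) (Γ i)
    simp only [hIqi, ← Finset.mul_sum]
  have hqs_fun : (fun ω => (∑ i, (∑ j, Γ i j * W j ω) ^ 2)
      * (∑ i, δ i * (∑ j, Γ i j * W j ω)))
      = fun ω => ∑ i, (∑ j, Γ i j * W j ω) * (∑ j, Γ i j * W j ω)
          * (∑ j, T j * W j ω) := by
    funext ω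
    rw [← hsT ω, Finset.sum_mul]
    exact Finset.sum_congr rfl fun i _ => by ring
  have hIqs : ∫ ω, (∑ i, (∑ j, Γ i j * W j ω) ^ 2)
      * (∑ i, δ i * (∑ j, Γ i j * W j ω)) ∂μ = 0 := by
    rw [hqs_fun, integral_finset_sum _ fun i _ => hS3 (Γ i) (Γ i) T]
    exact Finset.sum_eq_zero fun i _ => aux_sum3 W hWint3 hE3 (Γ i) (Γ i) T
  -- integrability of pieces, with explicit types
  have IA : Integrable (fun ω => (∑ i, (∑ j, Γ i j * W j ω) ^ 2) ^ 2) μ :=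
    aux_intP Γ W hWm hW4
  have IB : Integrable (fun ω => 4 * ((∑ i, δ i * (∑ j, Γ i j * W j ω))
      * (∑ i, δ i * (∑ j, Γ i j * W j ω)))) μ := by
    have : Integrable (fun ω => (∑ i, δ i * (∑ j, Γ i j * W j ω))
        * (∑ i, δ i * (∑ j, Γ i j * W j ω))) μ := by rw [hssfun]; exact hS2 T T
    exact this.const_mul 4
  have IC : Integrable (fun ω => 4 * ((∑ i, (∑ j, Γ i j * W j ω) ^ 2)
      * (∑ i, δ i * (∑ j, Γ i j * W j ω)))) μ := by
    have : Integrable (fun ω => (∑ i, (∑ j, Γ i j * W j ω) ^ 2)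
        * (∑ i, δ i * (∑ j, Γ i j * W j ω))) μ := by
      rw [hqs_fun]; exact integrable_finset_sum _ fun i _ => hS3 (Γ i) (Γ i) T
    exact this.const_mul 4
  have ID : Integrable (fun ω => 2 * c * (∑ i, (∑ j, Γ i j * W j ω) ^ 2)) μ :=
    (integrable_finset_sum _ fun i _ => hSsq (Γ i)).const_mul (2 * c)
  have IE : Integrable (fun ω => 4 * c * (∑ i, δ i * (∑ j, Γ i j * W j ω))) μ := by
    have : Integrable (fun ω => ∑ i, δ i * (∑ j, Γ i j * W j ω)) μ := by
      rw [hsTfun]; exact integrable_finset_sum _ fun j _ => (hWint j).const_mul _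
    exact this.const_mul (4 * c)
  have IAB : Integrable (fun ω => (∑ i, (∑ j, Γ i j * W j ω) ^ 2) ^ 2
      + 4 * ((∑ i, δ i * (∑ j, Γ i j * W j ω))
        * (∑ i, δ i * (∑ j, Γ i j * W j ω)))) μ := IA.add IB
  have IABC : Integrable (fun ω => (∑ i, (∑ j, Γ i j * W j ω) ^ 2) ^ 2
      + 4 * ((∑ i, δ i * (∑ j, Γ i j * W j ω)) * (∑ i, δ i * (∑ j, Γ i j * W j ω)))
      + 4 * ((∑ i, (∑ j, Γ i j * W j ω) ^ 2)
        * (∑ i, δ i * (∑ j, Γ i j * W j ω)))) μ := IAB.add IC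
  have IABCD : Integrable (fun ω => (∑ i, (∑ j, Γ i j * W j ω) ^ 2) ^ 2
      + 4 * ((∑ i, δ i * (∑ j, Γ i j * W j ω)) * (∑ i, δ i * (∑ j, Γ i j * W j ω)))
      + 4 * ((∑ i, (∑ j, Γ i j * W j ω) ^ 2) * (∑ i, δ i * (∑ j, Γ i j * W j ω)))
      + 2 * c * (∑ i, (∑ j, Γ i j * W j ω) ^ 2)) μ := IABC.add ID
  have IABCDE : Integrable (fun ω => (∑ i, (∑ j, Γ i j * W j ω) ^ 2) ^ 2
      + 4 * ((∑ i, δ i * (∑ j, Γ i j * W j ω)) * (∑ i, δ i * (∑ j, Γ i j * W j ω)))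
      + 4 * ((∑ i, (∑ j, Γ i j * W j ω) ^ 2) * (∑ i, δ i * (∑ j, Γ i j * W j ω)))
      + 2 * c * (∑ i, (∑ j, Γ i j * W j ω) ^ 2)
      + 4 * c * (∑ i, δ i * (∑ j, Γ i j * W j ω))) μ := IABCD.add IE
  -- pointwise expansion
  have hpt : ∀ ω, (∑ i, (∑ j, Γ i j * W j ω + δ i) ^ 2) ^ 2
      = (∑ i, (∑ j, Γ i j * W j ω) ^ 2) ^ 2
        + 4 * ((∑ i, δ i * (∑ j, Γ i j * W j ω)) * (∑ i, δ i * (∑ j, Γ i j * W j ω)))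
        + 4 * ((∑ i, (∑ j, Γ i j * W j ω) ^ 2) * (∑ i, δ i * (∑ j, Γ i j * W j ω)))
        + 2 * c * (∑ i, (∑ j, Γ i j * W j ω) ^ 2)
        + 4 * c * (∑ i, δ i * (∑ j, Γ i j * W j ω))
        + c ^ 2 := by
    intro ω
    have h1 : (∑ i, (∑ j, Γ i j * W j ω + δ i) ^ 2)
        = (∑ i, (∑ j, Γ i j * W j ω) ^ 2)
          + 2 * (∑ i, δ i * (∑ j, Γ i j * W j ω)) + c := by
      rw [hc, Finset.mul_sum, ← Finset.sum_add_distrib, ← Finset.sum_add_distrib]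
      exact Finset.sum_congr rfl fun i _ => by ring
    rw [h1]; ring
  rw [show (fun ω => (∑ i, (∑ j, Γ i j * W j ω + δ i) ^ 2) ^ 2)
    = fun ω => (∑ i, (∑ j, Γ i j * W j ω) ^ 2) ^ 2
        + 4 * ((∑ i, δ i * (∑ j, Γ i j * W j ω)) * (∑ i, δ i * (∑ j, Γ i j * W j ω)))
        + 4 * ((∑ i, (∑ j, Γ i j * W j ω) ^ 2) * (∑ i, δ i * (∑ j, Γ i j * W j ω)))
        + 2 * c * (∑ i, (∑ j, Γ i j * W j ω) ^ 2)
        + 4 * c * (∑ i, δ i * (∑ j, Γ i j * W j ω))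
        + c ^ 2 from funext hpt]
  rw [integral_add IABCDE (integrable_const _), integral_add IABCD IE,
      integral_add IABC ID, integral_add IAB IC, integral_add IA IB,
      integral_const_mul, integral_const_mul, integral_const_mul, integral_const_mul,
      hIs, hIs2, hIq, hIqs, integral_const]
  simp only [measure_univ, ENNReal.toReal_one, probReal_univ, smul_eq_mul, one_mul]
  have hTT : (∑ j, T j * T j) = ∑ j, (∑ i, δ i * Γ i j) ^ 2 :=
    Finset.sum_congr rfl fun j _ => by rw [hT]; ring
  rw [hTT]; ring
end Aux4

section Aux5
variable {Ω : Type*} [MeasurableSpace Ω] {μ : Measure Ω} [IsProbabilityMeasure μ]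

private lemma aux_iIndep_comp {ι κ : Type*} (f : ι → Ω → ℝ)
    (hf : iIndepFun f μ) (e : κ → ι)
    (he : Function.Injective e) :
    iIndepFun (fun p => f (e p)) μ := by
  classical
  rw [iIndepFun_iff_measure_inter_preimage_eq_mul]
  intro S sets H
  set sets' : ι → Set ℝ := Function.extend e sets fun _ => Set.univ with hsets'
  have hee : ∀ p, sets' (e p) = sets p := fun p => he.extend_apply _ _ _
  have h1 : (⋂ p ∈ S, f (e p) ⁻¹' sets p) = ⋂ i ∈ S.image e, f i ⁻¹' sets' i := by
    ext ω
    simp only [Set.mem_iInter, Finset.mem_image]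
    constructor
    · rintro h i ⟨p, hp, rfl⟩
      rw [hee]; exact h p hp
    · intro h p hp
      have := h (e p) ⟨p, hp, rfl⟩
      rwa [hee] at this
  have h2 := hf.measure_inter_preimage_eq_mul (S.image e) (sets := sets')
    (fun i hi => by
      rcases Finset.mem_image.1 hi with ⟨p, hp, rfl⟩
      rw [hee]; exact H p hp)
  rw [h1, h2, Finset.prod_image (fun p _ q _ h => he h)]
  exact Finset.prod_congr rfl fun p hp => by rw [hee]

private lemma aux_map_eq_pi {κ : Type*} [Fintype κ] (f : κ → Ω → ℝ)
    (hm : ∀ p, Measurable (f p))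
    (hf : iIndepFun f μ) (ν : κ → Measure ℝ)
    (hprob : ∀ p, IsProbabilityMeasure (ν p)) (hν : ∀ p, μ.map (f p) = ν p) :
    μ.map (fun ω p => f p ω) = Measure.pi ν := by
  haveI := hprob
  refine (Measure.pi_eq fun s hs => ?_).symm
  rw [Measure.map_apply (measurable_pi_lambda _ hm) (MeasurableSet.univ_pi hs)]
  have h1 : (fun ω p => f p ω) ⁻¹' Set.pi Set.univ s
      = ⋂ p ∈ (Finset.univ : Finset κ), f p ⁻¹' s p := by
    ext ω; simp [Set.mem_pi]
  rw [h1, hf.measure_inter_preimage_eq_mul Finset.univ (fun p _ => hs p)]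
  exact Finset.prod_congr rfl fun p _ => by
    rw [← hν p, Measure.map_apply (hm p) (hs p)]
end Aux5

/-- With `X = ΓZ₁ + μ₁`, `X' = ΓZ₂ + μ₁`, `Y = ΓZ₃ + μ₂`, `Y' = ΓZ₄ + μ₂`, where the `4D`
coordinates of `Z₁, Z₂, Z₃, Z₄` are i.i.d. with mean 0, variance 1 and finite fourth
moment, `ΓΓᵀ = S` and `δ = μ₁ − μ₂`, the degree-four kernel
`h₄ = ‖X−X'‖⁴ + ‖Y−Y'‖⁴ − ‖X−Y'‖⁴ − ‖X'−Y‖⁴` satisfies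
`E[h₄] = −16·δᵀSδ − 8·‖δ‖²·Tr(S) − 2·‖δ‖⁴`. -/
theorem expected_h4 {Ω : Type*} [MeasurableSpace Ω] (μ : Measure Ω)
    [IsProbabilityMeasure μ] {d D : ℕ}
    (Γ : Matrix (Fin d) (Fin D) ℝ) (S : Matrix (Fin d) (Fin d) ℝ)
    (hΓ : Γ * Γ.transpose = S)
    (Z₁ Z₂ Z₃ Z₄ : Ω → Fin D → ℝ)
    (hmeas : ∀ p : Fin 4 × Fin D, Measurable fun ω => ![Z₁ ω, Z₂ ω, Z₃ ω, Z₄ ω] p.1 p.2)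
    (hindep : iIndepFun
      (fun p : Fin 4 × Fin D => fun ω => ![Z₁ ω, Z₂ ω, Z₃ ω, Z₄ ω] p.1 p.2) μ)
    (hident : ∀ p q : Fin 4 × Fin D,
      IdentDistrib (fun ω => ![Z₁ ω, Z₂ ω, Z₃ ω, Z₄ ω] p.1 p.2)
        (fun ω => ![Z₁ ω, Z₂ ω, Z₃ ω, Z₄ ω] q.1 q.2) μ μ)
    (hmean : ∀ p : Fin 4 × Fin D, ∫ ω, ![Z₁ ω, Z₂ ω, Z₃ ω, Z₄ ω] p.1 p.2 ∂μ = 0)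
    (hvar : ∀ p : Fin 4 × Fin D, ∫ ω, (![Z₁ ω, Z₂ ω, Z₃ ω, Z₄ ω] p.1 p.2) ^ 2 ∂μ = 1)
    (hL4 : ∀ p : Fin 4 × Fin D,
      Integrable (fun ω => (![Z₁ ω, Z₂ ω, Z₃ ω, Z₄ ω] p.1 p.2) ^ 4) μ)
    (μ₁ μ₂ : Fin d → ℝ) (X X' Y Y' : Ω → Fin d → ℝ)
    (hX : ∀ ω, X ω = Γ.mulVec (Z₁ ω) + μ₁)
    (hX' : ∀ ω, X' ω = Γ.mulVec (Z₂ ω) + μ₁)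
    (hY : ∀ ω, Y ω = Γ.mulVec (Z₃ ω) + μ₂)
    (hY' : ∀ ω, Y' ω = Γ.mulVec (Z₄ ω) + μ₂)
    (δ : Fin d → ℝ) (hδ : δ = μ₁ - μ₂)
    (h₄ : Ω → ℝ)
    (hh₄ : ∀ ω, h₄ ω = (∑ i, (X ω i - X' ω i) ^ 2) ^ 2 + (∑ i, (Y ω i - Y' ω i) ^ 2) ^ 2
      - (∑ i, (X ω i - Y' ω i) ^ 2) ^ 2 - (∑ i, (X' ω i - Y ω i) ^ 2) ^ 2) :
    ∫ ω, h₄ ω ∂μ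
      = -16 * (δ ⬝ᵥ S.mulVec δ) - 8 * (∑ i, (δ i) ^ 2) * S.trace
        - 2 * (∑ i, (δ i) ^ 2) ^ 2 := by
  classical
  -- Abstract the scalar family
  obtain ⟨V, hVm, hVindep, hVid, hVmean, hVvar, hVL4, hVZ⟩ :
      ∃ V : Fin 4 × Fin D → Ω → ℝ,
        (∀ p, Measurable (V p)) ∧
        iIndepFun V μ ∧
        (∀ p q, IdentDistrib (V p) (V q) μ μ) ∧
        (∀ p, ∫ ω, V p ω ∂μ = 0) ∧
        (∀ p, ∫ ω, V p ω ^ 2 ∂μ = 1) ∧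
        (∀ p, Integrable (fun ω => V p ω ^ 4) μ) ∧
        (∀ (j : Fin D) (ω : Ω), V (0, j) ω = Z₁ ω j ∧ V (1, j) ω = Z₂ ω j
          ∧ V (2, j) ω = Z₃ ω j ∧ V (3, j) ω = Z₄ ω j) :=
    ⟨fun p ω => ![Z₁ ω, Z₂ ω, Z₃ ω, Z₄ ω] p.1 p.2, hmeas, hindep, hident, hmean, hvar, hL4,
      fun j ω => ⟨rfl, rfl, rfl, rfl⟩⟩
  obtain ⟨W, hW⟩ : ∃ W : Fin 4 → Fin 4 → Fin D → Ω → ℝ,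
      ∀ a b j ω, W a b j ω = V (a, j) ω - V (b, j) ω :=
    ⟨fun a b j ω => V (a, j) ω - V (b, j) ω, fun _ _ _ _ => rfl⟩
  have hWfun : ∀ a b j, W a b j = fun ω => V (a, j) ω - V (b, j) ω :=
    fun a b j => funext fun ω => hW a b j ω
  -- basic facts about V
  have hV1 : ∀ p, Integrable (V p) μ := fun p => aux_int1 (hVm p) (hVL4 p)
  have hM2 : ∀ p q, Integrable (fun ω => V p ω * V q ω) μ := fun p q =>
    aux_int_mul2 (hVm p) (hVm q) (hVL4 p) (hVL4 q)
  have hM3 : ∀ p q r, Integrable (fun ω => V p ω * V q ω * V r ω) μ := fun p q r =>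
    aux_int_mul3 (hVm p) (hVm q) (hVm r) (hVL4 p) (hVL4 q) (hVL4 r)
  have hVsq : ∀ p, ∫ ω, V p ω * V p ω ∂μ = 1 := fun p => by
    simpa only [pow_two] using hVvar p
  have hVsub0 : ∀ p q, ∫ ω, V p ω - V q ω ∂μ = 0 := by
    intro p q
    rw [integral_sub (hV1 p) (hV1 q), hVmean, hVmean, sub_zero]
  have hVpair : ∀ p q, p ≠ q → ∫ ω, V p ω * V q ω ∂μ = 0 := by
    intro p q hpq
    have h := (hVindep.indepFun hpq).integral_mul_eq_mul_integral (hV1 p).aestronglyMeasurable (hV1 q).aestronglyMeasurable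
    have e : (fun ω => V p ω * V q ω) = V p * V q := rfl
    rw [e, h, hVmean p, hVmean q, mul_zero]
  have hVtrip : ∀ p q r, p ≠ r → q ≠ r → ∫ ω, V p ω * V q ω * V r ω ∂μ = 0 := by
    intro p q r hpr hqr
    have h := (hVindep.indepFun_mul_left hVm p q r hpr hqr).integral_mul_eq_mul_integral
      (hM2 p q).aestronglyMeasurable (hV1 r).aestronglyMeasurable
    have e : (fun ω => V p ω * V q ω * V r ω) = V p * V q * V r := rfl
    rw [e, h, hVmean r, mul_zero]
  have hne2 : ∀ (x y : Fin 4) (j l : Fin D), j ≠ l →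
      ((x, j) : Fin 4 × Fin D) ≠ (y, l) := fun _ _ _ _ hjl h => hjl (congrArg Prod.snd h)
  -- moments of W (for a ≠ b)
  have hWm : ∀ a b j, Measurable (W a b j) := by
    intro a b j; rw [hWfun]; exact (hVm _).sub (hVm _)
  have hWL4 : ∀ a b j, Integrable (fun ω => W a b j ω ^ 4) μ := by
    intro a b j
    simp only [hW]
    exact aux_L4_sub (hVm _) (hVm _) (hVL4 _) (hVL4 _)
  have hE1W : ∀ a b j, ∫ ω, W a b j ω ∂μ = 0 := by
    intro a b j
    simp only [hW]
    exact hVsub0 _ _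
  have hneab : ∀ (a b : Fin 4), a ≠ b → ∀ j : Fin D,
      ((a, j) : Fin 4 × Fin D) ≠ (b, j) := fun a b hab j h => hab (congrArg Prod.fst h)
  have hE2W : ∀ a b, a ≠ b → ∀ j k,
      ∫ ω, W a b j ω * W a b k ω ∂μ = if j = k then 2 else 0 := by
    intro a b hab j k
    simp only [hW]
    rw [show (fun ω => (V (a, j) ω - V (b, j) ω) * (V (a, k) ω - V (b, k) ω))
      = fun ω => V (a, j) ω * V (a, k) ω - V (a, j) ω * V (b, k) ω
          - (V (b, j) ω * V (a, k) ω - V (b, j) ω * V (b, k) ω) from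
      funext fun ω => by ring]
    have I1 : Integrable (fun ω => V (a, j) ω * V (a, k) ω - V (a, j) ω * V (b, k) ω) μ :=
      (hM2 _ _).sub (hM2 _ _)
    have I2 : Integrable (fun ω => V (b, j) ω * V (a, k) ω - V (b, j) ω * V (b, k) ω) μ :=
      (hM2 _ _).sub (hM2 _ _)
    rw [integral_sub I1 I2, integral_sub (hM2 (a, j) (a, k)) (hM2 (a, j) (b, k)),
        integral_sub (hM2 (b, j) (a, k)) (hM2 (b, j) (b, k))]
    by_cases hjk : j = k
    · subst hjk
      rw [if_pos rfl, hVsq, hVsq, hVpair _ _ (hneab a b hab j),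
        hVpair _ _ (hneab b a (Ne.symm hab) j)]
      norm_num
    · rw [if_neg hjk, hVpair _ _ (hne2 a a j k hjk), hVpair _ _ (hne2 a b j k hjk),
        hVpair _ _ (hne2 b a j k hjk), hVpair _ _ (hne2 b b j k hjk)]
      ring
  -- third moments of W vanish
  have hcube : ∀ a b, a ≠ b → ∀ j, ∫ ω, W a b j ω * W a b j ω * W a b j ω ∂μ = 0 := by
    intro a b hab j
    simp only [hW]
    rw [show (fun ω => (V (a, j) ω - V (b, j) ω) * (V (a, j) ω - V (b, j) ω)
          * (V (a, j) ω - V (b, j) ω))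
      = fun ω => (V (a, j) ω * V (a, j) ω * V (a, j) ω
            - 3 * (V (a, j) ω * V (a, j) ω * V (b, j) ω))
          + 3 * (V (b, j) ω * V (b, j) ω * V (a, j) ω)
          - V (b, j) ω * V (b, j) ω * V (b, j) ω from funext fun ω => by ring]
    have I1 : Integrable (fun ω => V (a, j) ω * V (a, j) ω * V (a, j) ω
        - 3 * (V (a, j) ω * V (a, j) ω * V (b, j) ω)) μ :=
      (hM3 _ _ _).sub ((hM3 _ _ _).const_mul 3)
    have I2 : Integrable (fun ω => (V (a, j) ω * V (a, j) ω * V (a, j) ω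
        - 3 * (V (a, j) ω * V (a, j) ω * V (b, j) ω))
        + 3 * (V (b, j) ω * V (b, j) ω * V (a, j) ω)) μ :=
      I1.add ((hM3 _ _ _).const_mul 3)
    rw [integral_sub I2 (hM3 (b, j) (b, j) (b, j)),
        integral_add I1 ((hM3 (b, j) (b, j) (a, j)).const_mul 3),
        integral_sub (hM3 (a, j) (a, j) (a, j)) ((hM3 (a, j) (a, j) (b, j)).const_mul 3),
        integral_const_mul, integral_const_mul]
    rw [hVtrip (a, j) (a, j) (b, j) (hneab a b hab j) (hneab a b hab j),
        hVtrip (b, j) (b, j) (a, j) (hneab b a (Ne.symm hab) j) (hneab b a (Ne.symm hab) j)]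
    have h3 := ((hVid (a, j) (b, j)).comp (measurable_id.pow_const 3)).integral_eq
    have h3' : ∫ ω, V (a, j) ω * V (a, j) ω * V (a, j) ω ∂μ
        = ∫ ω, V (b, j) ω * V (b, j) ω * V (b, j) ω ∂μ := by
      simpa only [Function.comp, id, show ∀ x : ℝ, x ^ 3 = x * x * x from fun x => by ring]
        using h3
    rw [h3']; ring
  -- isolated-index third moment
  have hiso : ∀ a b, a ≠ b → ∀ j k l, l ≠ j → l ≠ k →
      ∫ ω, W a b j ω * W a b k ω * W a b l ω ∂μ = 0 := by
    intro a b hab j k l hlj hlk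
    simp only [hW]
    have hd : Disjoint ({((a, j) : Fin 4 × Fin D), (b, j), (a, k), (b, k)} : Finset _)
        ({((a, l) : Fin 4 × Fin D), (b, l)} : Finset _) := by
      simp only [Finset.disjoint_left, Finset.mem_insert, Finset.mem_singleton]
      rintro x (rfl | rfl | rfl | rfl) <;>
        simp [Prod.ext_iff, Ne.symm hlj, Ne.symm hlk]
    have base := hVindep.indepFun_finset {(a, j), (b, j), (a, k), (b, k)} {(a, l), (b, l)}
      hd hVm
    have hφm : Measurable fun v : ({((a, j) : Fin 4 × Fin D), (b, j), (a, k), (b, k)}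
        : Finset (Fin 4 × Fin D)) → ℝ =>
        (v ⟨(a, j), by simp⟩ - v ⟨(b, j), by simp⟩)
          * (v ⟨(a, k), by simp⟩ - v ⟨(b, k), by simp⟩) := by
      apply Measurable.mul
      · exact (measurable_pi_apply _).sub (measurable_pi_apply _)
      · exact (measurable_pi_apply _).sub (measurable_pi_apply _)
    have hψm : Measurable fun v : ({((a, l) : Fin 4 × Fin D), (b, l)}
        : Finset (Fin 4 × Fin D)) → ℝ => v ⟨(a, l), by simp⟩ - v ⟨(b, l), by simp⟩ := by
      exact (measurable_pi_apply _).sub (measurable_pi_apply _)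
    have h := (base.comp hφm hψm).integral_mul_eq_mul_integral
      (show Integrable (fun ω => (V (a, j) ω - V (b, j) ω) * (V (a, k) ω - V (b, k) ω)) μ from
        aux_int_mul2 ((hVm _).sub (hVm _)) ((hVm _).sub (hVm _))
          (aux_L4_sub (hVm _) (hVm _) (hVL4 _) (hVL4 _))
          (aux_L4_sub (hVm _) (hVm _) (hVL4 _) (hVL4 _))).aestronglyMeasurable
      (show Integrable (fun ω => V (a, l) ω - V (b, l) ω) μ from (hV1 _).sub (hV1 _)).aestronglyMeasurable
    have e2 : ∫ ω, V (a, l) ω - V (b, l) ω ∂μ = 0 := hVsub0 (a, l) (b, l)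
    calc ∫ ω, (V (a, j) ω - V (b, j) ω) * (V (a, k) ω - V (b, k) ω)
          * (V (a, l) ω - V (b, l) ω) ∂μ
        = (∫ ω, (V (a, j) ω - V (b, j) ω) * (V (a, k) ω - V (b, k) ω) ∂μ)
            * ∫ ω, V (a, l) ω - V (b, l) ω ∂μ := h
      _ = 0 := by rw [e2, mul_zero]
  have hE3W : ∀ a b, a ≠ b → ∀ j k l,
      ∫ ω, W a b j ω * W a b k ω * W a b l ω ∂μ = 0 := by
    intro a b hab j k l
    by_cases hlj : l = j
    · subst hlj
      by_cases hlk : l = k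
      · subst hlk
        exact hcube a b hab l
      · rw [show (fun ω => W a b l ω * W a b k ω * W a b l ω)
          = fun ω => W a b l ω * W a b l ω * W a b k ω from funext fun ω => by ring]
        exact hiso a b hab l l k (Ne.symm hlk) (Ne.symm hlk)
    · by_cases hlk : l = k
      · subst hlk
        rw [show (fun ω => W a b j ω * W a b l ω * W a b l ω)
          = fun ω => W a b l ω * W a b l ω * W a b j ω from funext fun ω => by ring]
        exact hiso a b hab l l j (Ne.symm hlj) (Ne.symm hlj)
      · exact hiso a b hab j k l hlj hlk
    -- all pairs (a,b), a ≠ b, give the same law for the vector (V (a,·), V (b,·))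
  have hinj : ∀ a b : Fin 4, a ≠ b →
      Function.Injective (fun p : Fin 2 × Fin D => ((![a, b] p.1 : Fin 4), p.2)) := by
    intro a b hab p q h
    simp only [Prod.mk.injEq] at h
    obtain ⟨h1, h2⟩ := h
    have h3 : p.1 = q.1 := by
      rcases p with ⟨p1, p2⟩; rcases q with ⟨q1, q2⟩
      simp only at h1 ⊢
      fin_cases p1 <;> fin_cases q1 <;>
        simp only [Matrix.cons_val_zero, Matrix.cons_val_one, Matrix.head_cons] at h1 <;>
        first
          | rfl
          | exact absurd h1 hab
          | exact absurd h1.symm hab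
    exact Prod.ext h3 h2
  have hlaw : ∀ a b : Fin 4, a ≠ b →
      μ.map (fun ω (p : Fin 2 × Fin D) => V (![a, b] p.1, p.2) ω)
        = Measure.pi (fun p : Fin 2 × Fin D => μ.map (V (![(0 : Fin 4), 1] p.1, p.2))) := by
    intro a b hab
    exact aux_map_eq_pi _ (fun p => hVm _)
      (aux_iIndep_comp V hVindep _ (hinj a b hab)) _
      (fun p => Measure.isProbabilityMeasure_map (hVm _).aemeasurable)
      (fun p => (hVid _ _).map_eq)
  have hPeq : ∀ a b : Fin 4, a ≠ b →
      ∫ ω, (∑ i, (∑ j, Γ i j * W a b j ω) ^ 2) ^ 2 ∂μ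
        = ∫ ω, (∑ i, (∑ j, Γ i j * W 0 1 j ω) ^ 2) ^ 2 ∂μ := by
    intro a b hab
    have hΦm : Measurable fun x : Fin 2 × Fin D → ℝ =>
        (∑ i, (∑ j, Γ i j * (x (0, j) - x (1, j))) ^ 2) ^ 2 := by
      apply Measurable.pow_const
      apply Finset.measurable_sum; intro i _
      apply Measurable.pow_const
      apply Finset.measurable_sum; intro j _
      exact ((measurable_pi_apply ((0 : Fin 2), j)).sub
        (measurable_pi_apply ((1 : Fin 2), j))).const_mul _
    have hid : IdentDistrib (fun ω (p : Fin 2 × Fin D) => V (![a, b] p.1, p.2) ω)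
        (fun ω (p : Fin 2 × Fin D) => V (![(0 : Fin 4), 1] p.1, p.2) ω) μ μ :=
      ⟨(measurable_pi_lambda _ fun p => hVm _).aemeasurable,
       (measurable_pi_lambda _ fun p => hVm _).aemeasurable,
       by rw [hlaw a b hab, hlaw 0 1 (by decide)]⟩
    have h := (hid.comp hΦm).integral_eq
    have key : ∀ a b : Fin 4,
        (fun ω => (fun x : Fin 2 × Fin D → ℝ =>
            (∑ i, (∑ j, Γ i j * (x (0, j) - x (1, j))) ^ 2) ^ 2)
          (fun p : Fin 2 × Fin D => V (![a, b] p.1, p.2) ω))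
        = fun ω => (∑ i, (∑ j, Γ i j * W a b j ω) ^ 2) ^ 2 := by
      intro a b; funext ω
      simp only [Matrix.cons_val_zero, Matrix.cons_val_one, Matrix.head_cons]
      refine congrArg (· ^ 2) (Finset.sum_congr rfl fun i _ =>
        congrArg (· ^ 2) (Finset.sum_congr rfl fun j _ => ?_))
      rw [hW]
    have h' : ∫ ω, (fun x : Fin 2 × Fin D → ℝ =>
          (∑ i, (∑ j, Γ i j * (x (0, j) - x (1, j))) ^ 2) ^ 2)
        (fun p : Fin 2 × Fin D => V (![a, b] p.1, p.2) ω) ∂μ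
        = ∫ ω, (fun x : Fin 2 × Fin D → ℝ =>
          (∑ i, (∑ j, Γ i j * (x (0, j) - x (1, j))) ^ 2) ^ 2)
        (fun p : Fin 2 × Fin D => V (![(0 : Fin 4), 1] p.1, p.2) ω) ∂μ := h
    rw [key a b, key 0 1] at h'
    exact h'
  -- value of the shifted fourth moment, for each pair
  have hQval : ∀ a b : Fin 4, a ≠ b →
      ∫ ω, (∑ i, (∑ j, Γ i j * W a b j ω + δ i) ^ 2) ^ 2 ∂μ
        = (∫ ω, (∑ i, (∑ j, Γ i j * W a b j ω) ^ 2) ^ 2 ∂μ)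
          + 8 * (∑ j, (∑ i, δ i * Γ i j) ^ 2)
          + 4 * (∑ i, δ i ^ 2) * (∑ i, ∑ j, Γ i j ^ 2) + (∑ i, δ i ^ 2) ^ 2 :=
    fun a b hab => aux_pair Γ δ (W a b) (hWm a b) (hWL4 a b) (hE1W a b)
      (hE2W a b hab) (hE3W a b hab)
  -- pointwise rewriting of h₄
  have hptX : ∀ ω (i : Fin d), X ω i - X' ω i = ∑ j, Γ i j * W 0 1 j ω := by
    intro ω i
    rw [hX, hX']
    simp only [Pi.add_apply, Matrix.mulVec, dotProduct]
    rw [show (∑ j, Γ i j * Z₁ ω j + μ₁ i) - (∑ j, Γ i j * Z₂ ω j + μ₁ i)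
        = (∑ j, Γ i j * Z₁ ω j) - ∑ j, Γ i j * Z₂ ω j from by ring,
      ← Finset.sum_sub_distrib]
    exact Finset.sum_congr rfl fun j _ => by
      rw [hW, (hVZ j ω).1, (hVZ j ω).2.1]; ring
  have hptY : ∀ ω (i : Fin d), Y ω i - Y' ω i = ∑ j, Γ i j * W 2 3 j ω := by
    intro ω i
    rw [hY, hY']
    simp only [Pi.add_apply, Matrix.mulVec, dotProduct]
    rw [show (∑ j, Γ i j * Z₃ ω j + μ₂ i) - (∑ j, Γ i j * Z₄ ω j + μ₂ i)
        = (∑ j, Γ i j * Z₃ ω j) - ∑ j, Γ i j * Z₄ ω j from by ring,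
      ← Finset.sum_sub_distrib]
    exact Finset.sum_congr rfl fun j _ => by
      rw [hW, (hVZ j ω).2.2.1, (hVZ j ω).2.2.2]; ring
  have hptXY : ∀ ω (i : Fin d), X ω i - Y' ω i = ∑ j, Γ i j * W 0 3 j ω + δ i := by
    intro ω i
    rw [hX, hY', hδ]
    simp only [Pi.add_apply, Pi.sub_apply, Matrix.mulVec, dotProduct]
    rw [show (∑ j, Γ i j * Z₁ ω j + μ₁ i) - (∑ j, Γ i j * Z₄ ω j + μ₂ i)
        = ((∑ j, Γ i j * Z₁ ω j) - ∑ j, Γ i j * Z₄ ω j) + (μ₁ i - μ₂ i) from by ring,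
      ← Finset.sum_sub_distrib]
    congr 1
    exact Finset.sum_congr rfl fun j _ => by
      rw [hW, (hVZ j ω).1, (hVZ j ω).2.2.2]; ring
  have hptXY' : ∀ ω (i : Fin d), X' ω i - Y ω i = ∑ j, Γ i j * W 1 2 j ω + δ i := by
    intro ω i
    rw [hX', hY, hδ]
    simp only [Pi.add_apply, Pi.sub_apply, Matrix.mulVec, dotProduct]
    rw [show (∑ j, Γ i j * Z₂ ω j + μ₁ i) - (∑ j, Γ i j * Z₃ ω j + μ₂ i)
        = ((∑ j, Γ i j * Z₂ ω j) - ∑ j, Γ i j * Z₃ ω j) + (μ₁ i - μ₂ i) from by ring,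
      ← Finset.sum_sub_distrib]
    congr 1
    exact Finset.sum_congr rfl fun j _ => by
      rw [hW, (hVZ j ω).2.1, (hVZ j ω).2.2.1]; ring
  have hh4pt : (fun ω => h₄ ω)
      = fun ω => (∑ i, (∑ j, Γ i j * W 0 1 j ω) ^ 2) ^ 2
          + (∑ i, (∑ j, Γ i j * W 2 3 j ω) ^ 2) ^ 2
          - (∑ i, (∑ j, Γ i j * W 0 3 j ω + δ i) ^ 2) ^ 2
          - (∑ i, (∑ j, Γ i j * W 1 2 j ω + δ i) ^ 2) ^ 2 := by
    funext ω
    rw [hh₄ ω,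
      show (∑ i, (X ω i - X' ω i) ^ 2) = ∑ i, (∑ j, Γ i j * W 0 1 j ω) ^ 2 from
        Finset.sum_congr rfl fun i _ => by rw [hptX ω i],
      show (∑ i, (Y ω i - Y' ω i) ^ 2) = ∑ i, (∑ j, Γ i j * W 2 3 j ω) ^ 2 from
        Finset.sum_congr rfl fun i _ => by rw [hptY ω i],
      show (∑ i, (X ω i - Y' ω i) ^ 2) = ∑ i, (∑ j, Γ i j * W 0 3 j ω + δ i) ^ 2 from
        Finset.sum_congr rfl fun i _ => by rw [hptXY ω i],
      show (∑ i, (X' ω i - Y ω i) ^ 2) = ∑ i, (∑ j, Γ i j * W 1 2 j ω + δ i) ^ 2 from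
        Finset.sum_congr rfl fun i _ => by rw [hptXY' ω i]]
  -- split the integral
  have IP01 : Integrable (fun ω => (∑ i, (∑ j, Γ i j * W 0 1 j ω) ^ 2) ^ 2) μ :=
    aux_intP Γ (W 0 1) (hWm 0 1) (hWL4 0 1)
  have IP23 : Integrable (fun ω => (∑ i, (∑ j, Γ i j * W 2 3 j ω) ^ 2) ^ 2) μ :=
    aux_intP Γ (W 2 3) (hWm 2 3) (hWL4 2 3)
  have IQ03 : Integrable (fun ω => (∑ i, (∑ j, Γ i j * W 0 3 j ω + δ i) ^ 2) ^ 2) μ :=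
    aux_intQ Γ δ (W 0 3) (hWm 0 3) (hWL4 0 3)
  have IQ12 : Integrable (fun ω => (∑ i, (∑ j, Γ i j * W 1 2 j ω + δ i) ^ 2) ^ 2) μ :=
    aux_intQ Γ δ (W 1 2) (hWm 1 2) (hWL4 1 2)
  have I1 : Integrable (fun ω => (∑ i, (∑ j, Γ i j * W 0 1 j ω) ^ 2) ^ 2
      + (∑ i, (∑ j, Γ i j * W 2 3 j ω) ^ 2) ^ 2) μ := IP01.add IP23
  have I2 : Integrable (fun ω => (∑ i, (∑ j, Γ i j * W 0 1 j ω) ^ 2) ^ 2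
      + (∑ i, (∑ j, Γ i j * W 2 3 j ω) ^ 2) ^ 2
      - (∑ i, (∑ j, Γ i j * W 0 3 j ω + δ i) ^ 2) ^ 2) μ := I1.sub IQ03
  rw [hh4pt, integral_sub I2 IQ12, integral_sub I1 IQ03, integral_add IP01 IP23,
    hQval 0 3 (by decide), hQval 1 2 (by decide), hPeq 0 3 (by decide),
    hPeq 1 2 (by decide), hPeq 2 3 (by decide)]
  -- matrix algebra
  have hSδ : δ ⬝ᵥ S.mulVec δ = ∑ j, (∑ i, δ i * Γ i j) ^ 2 := by
    rw [← hΓ, ← Matrix.mulVec_mulVec, Matrix.dotProduct_mulVec]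
    simp only [Matrix.vecMul, Matrix.mulVec, dotProduct, Matrix.transpose_apply]
    exact Finset.sum_congr rfl fun j _ => by
      rw [pow_two]
      congr 1
      exact Finset.sum_congr rfl fun i _ => by ring
  have htr : S.trace = ∑ i, ∑ j, Γ i j ^ 2 := by
    rw [← hΓ]
    simp only [Matrix.trace, Matrix.diag, Matrix.mul_apply, Matrix.transpose_apply, pow_two]
  rw [hSδ, htr]
  ring
end

section
/- Let Z be a random vector in ℝ^d whose coordinates are i.i.d. standard Gaussian (mean 0, variance 1), and let Π be a symmetric real d×d matrix. Then the matrix expectation E[(ZᵀΠZ)²·ZZᵀ] = 8Π² + 4·Tr(Π)·Π + (2·Tr(Π²) + (Tr(Π))²)·I, where I is the d×d identity matrix. -/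
open MeasureTheory ProbabilityTheory Real
open scoped ENNReal NNReal

noncomputable def gm : ℕ → ℝ
  | 0 => 1
  | 1 => 0
  | (n+2) => (n+1) * gm n

lemma gm_succ (n : ℕ) : gm (n+1) = n * gm (n-1) := by
  cases n with
  | zero => simp [gm]
  | succ k => simp [gm]

lemma pow_le_exp_mul (n : ℕ) {y : ℝ} (hy : 0 ≤ y) : y ^ n ≤ n.factorial * Real.exp y := by
  have hfac : (0:ℝ) < n.factorial := by positivity
  have h2 : y ^ n / n.factorial ≤ ∑ i ∈ Finset.range (n+1), y ^ i / i.factorial := by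
    refine Finset.single_le_sum (f := fun i => y ^ i / i.factorial) ?_ (Finset.self_mem_range_succ n)
    intro i _; positivity
  have h := h2.trans (Real.sum_le_exp_of_nonneg hy (n+1))
  rw [div_le_iff₀ hfac] at h
  linarith [h, mul_comm (Real.exp y) ((n.factorial : ℝ))]

lemma integrable_pow_gauss (n : ℕ) :
    Integrable (fun x : ℝ => x ^ n * Real.exp (-x^2/2)) := by
  have h1 : Integrable (fun x : ℝ => Real.exp (-x^2/2)) := by
    have h := integrable_exp_neg_mul_sq (b := (1:ℝ)/2) (by norm_num)
    have e : (fun x : ℝ => Real.exp (-x^2/2)) = fun x : ℝ => Real.exp (-((1:ℝ)/2)*x^2) :=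
      funext fun x => by congr 1; ring
    rw [e]; exact h
  have h2 : Integrable (fun x : ℝ => Real.exp (-x^2/4)) := by
    have h := integrable_exp_neg_mul_sq (b := (1:ℝ)/4) (by norm_num)
    have e : (fun x : ℝ => Real.exp (-x^2/4)) = fun x : ℝ => Real.exp (-((1:ℝ)/4)*x^2) :=
      funext fun x => by congr 1; ring
    rw [e]; exact h
  have hg : Integrable (fun x : ℝ => Real.exp (-x^2/2)
      + (n.factorial * 4 ^ n) * Real.exp (-x^2/4)) := h1.add (h2.const_mul _)
  refine hg.mono' ?_ ?_
  · exact ((continuous_pow n).mul (by continuity)).aestronglyMeasurable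
  · refine Filter.Eventually.of_forall fun x => ?_
    have hx2 : (0:ℝ) ≤ x^2/4 := by positivity
    have key : x ^ (2*n) ≤ n.factorial * 4^n * Real.exp (x^2/4) := by
      have h := pow_le_exp_mul n hx2
      have h4 : ((x^2/4) ^ n) * 4^n = x^(2*n) := by
        rw [div_pow, pow_mul]; field_simp
      calc x^(2*n) = ((x^2/4)^n) * 4^n := h4.symm
        _ ≤ (n.factorial * Real.exp (x^2/4)) * 4^n :=
            mul_le_mul_of_nonneg_right h (by positivity)
        _ = n.factorial * 4^n * Real.exp (x^2/4) := by ring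
    have habs : |x| ^ n ≤ 1 + x^(2*n) := by
      rcases le_total (|x|) 1 with h | h
      · have h1 : |x| ^ n ≤ 1 := pow_le_one₀ (abs_nonneg x) h
        have h2 : (0:ℝ) ≤ x^(2*n) := by rw [pow_mul]; positivity
        linarith
      · have h1 : |x| ^ n ≤ |x| ^ (2*n) := pow_le_pow_right₀ h (by omega)
        have h2 : |x| ^ (2*n) = x ^ (2*n) := by rw [pow_mul, sq_abs, ← pow_mul]
        linarith
    have e3 : Real.exp (x^2/4) * Real.exp (-x^2/2) = Real.exp (-x^2/4) := by
      rw [← Real.exp_add]; ring_nf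
    have hnorm : ‖x ^ n * Real.exp (-x^2/2)‖ = |x| ^ n * Real.exp (-x^2/2) := by
      rw [norm_mul, norm_pow, Real.norm_eq_abs, Real.norm_eq_abs, Real.abs_exp]
    rw [hnorm]
    calc |x|^n * Real.exp (-x^2/2) ≤ (1 + x^(2*n)) * Real.exp (-x^2/2) :=
          mul_le_mul_of_nonneg_right habs (Real.exp_pos _).le
      _ = Real.exp (-x^2/2) + x^(2*n) * Real.exp (-x^2/2) := by ring
      _ ≤ Real.exp (-x^2/2) + (↑n.factorial * 4^n * Real.exp (x^2/4)) * Real.exp (-x^2/2) := by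
          have := mul_le_mul_of_nonneg_right key (Real.exp_pos (-x^2/2)).le
          linarith
      _ = Real.exp (-x^2/2) + (↑n.factorial * 4^n) * Real.exp (-x^2/4) := by
          rw [mul_assoc, e3]

lemma hasDeriv_aux (n : ℕ) (x : ℝ) :
    HasDerivAt (fun y : ℝ => -(y^(n+1) * Real.exp (-y^2/2)))
      (x^(n+2) * Real.exp (-x^2/2) - (n+1) * (x^n * Real.exp (-x^2/2))) x := by
  have h1 : HasDerivAt (fun y : ℝ => y^(n+1)) ((n+1) * x^n) x := by
    simpa using hasDerivAt_pow (n+1) x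
  have h2 : HasDerivAt (fun y : ℝ => Real.exp (-y^2/2)) (-x * Real.exp (-x^2/2)) x := by
    have hq : HasDerivAt (fun y : ℝ => -y^2/2) (-x) x := by
      have h := (hasDerivAt_pow 2 x).neg.div_const 2
      refine h.congr_deriv ?_
      push_cast; ring
    simpa [mul_comm] using hq.exp
  have := ((h1.mul h2).neg)
  refine this.congr_deriv ?_
  ring

lemma gauss_int_zero : ∫ x : ℝ, Real.exp (-x^2/2) = Real.sqrt (2*Real.pi) := by
  have h := integral_gaussian ((1:ℝ)/2)
  have e : (fun x : ℝ => Real.exp (-((1:ℝ)/2)*x^2)) = fun x : ℝ => Real.exp (-x^2/2) :=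
    funext fun x => by congr 1; ring
  rw [e] at h
  rw [h]; congr 1; rw [div_div_eq_mul_div]; ring_nf

lemma gauss_int_one : ∫ x : ℝ, x ^ 1 * Real.exp (-x^2/2) = 0 := by
  have hd : ∀ x : ℝ, HasDerivAt (fun y : ℝ => -Real.exp (-y^2/2))
      (x ^ 1 * Real.exp (-x^2/2)) x := by
    intro x
    have hq : HasDerivAt (fun y : ℝ => -y^2/2) (-x) x := by
      have h := (hasDerivAt_pow 2 x).neg.div_const 2
      refine h.congr_deriv ?_
      push_cast; ring
    have := hq.exp.neg
    refine this.congr_deriv ?_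
    ring
  have hint : Integrable (fun x : ℝ => -Real.exp (-x^2/2)) := by
    exact ((integrable_pow_gauss 0).neg).congr (Filter.Eventually.of_forall fun x => by simp)
  exact integral_eq_zero_of_hasDerivAt_of_integrable hd (integrable_pow_gauss 1) hint

lemma gauss_int_rec (n : ℕ) : ∫ x : ℝ, x ^ (n+2) * Real.exp (-x^2/2)
    = (n+1) * ∫ x : ℝ, x ^ n * Real.exp (-x^2/2) := by
  have hf' : Integrable (fun x : ℝ =>
      x^(n+2) * Real.exp (-x^2/2) - (n+1) * (x^n * Real.exp (-x^2/2))) :=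
    (integrable_pow_gauss (n+2)).sub ((integrable_pow_gauss n).const_mul _)
  have h0 := integral_eq_zero_of_hasDerivAt_of_integrable (hasDeriv_aux n) hf'
    (((integrable_pow_gauss (n+1)).neg).congr (Filter.Eventually.of_forall fun x => rfl))
  rw [integral_sub (integrable_pow_gauss (n+2)) ((integrable_pow_gauss n).const_mul _),
    MeasureTheory.integral_const_mul] at h0
  linarith

lemma gauss_int_eq (n : ℕ) :
    ∫ x : ℝ, x ^ n * Real.exp (-x^2/2) = Real.sqrt (2*Real.pi) * gm n := by
  induction n using Nat.twoStepInduction with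
  | zero => simpa [gm] using gauss_int_zero
  | one => simpa [gm] using gauss_int_one
  | more n ih _ => rw [gauss_int_rec n, ih, gm]; push_cast; ring

lemma gaussianPDFReal_std (x : ℝ) :
    gaussianPDFReal 0 1 x = (Real.sqrt (2*Real.pi))⁻¹ * Real.exp (-x^2/2) := by
  simp [gaussianPDFReal]

lemma gaussianReal_std :
    gaussianReal 0 1 = (volume : Measure ℝ).withDensity
      (fun x => ENNReal.ofReal ((Real.sqrt (2*Real.pi))⁻¹ * Real.exp (-x^2/2))) := by
  rw [gaussianReal_of_var_ne_zero _ one_ne_zero]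
  congr 1
  funext x
  rw [gaussianPDF, gaussianPDFReal_std]

lemma pdf_meas : Measurable (fun x : ℝ => ((Real.sqrt (2*Real.pi))⁻¹ * Real.exp (-x^2/2)).toNNReal) := by
  fun_prop

lemma integral_pow_gaussianReal (n : ℕ) :
    ∫ x : ℝ, x ^ n ∂(gaussianReal 0 1) = gm n := by
  rw [gaussianReal_std]
  have e : (fun x : ℝ => ENNReal.ofReal ((Real.sqrt (2*Real.pi))⁻¹ * Real.exp (-x^2/2)))
      = fun x : ℝ => (((Real.sqrt (2*Real.pi))⁻¹ * Real.exp (-x^2/2)).toNNReal : ℝ≥0∞) :=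
    funext fun x => rfl
  rw [e, integral_withDensity_eq_integral_smul pdf_meas]
  have hpos : (0:ℝ) < Real.sqrt (2*Real.pi) := Real.sqrt_pos.mpr (by positivity)
  have e2 : ∀ x : ℝ, (((Real.sqrt (2*Real.pi))⁻¹ * Real.exp (-x^2/2)).toNNReal : ℝ) • (x ^ n)
      = (Real.sqrt (2*Real.pi))⁻¹ * (x ^ n * Real.exp (-x^2/2)) := by
    intro x
    rw [Real.coe_toNNReal _ (by positivity), smul_eq_mul]
    ring
  calc ∫ x : ℝ, ((Real.sqrt (2*Real.pi))⁻¹ * Real.exp (-x^2/2)).toNNReal • (x ^ n)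
      = ∫ x : ℝ, (Real.sqrt (2*Real.pi))⁻¹ * (x ^ n * Real.exp (-x^2/2)) := by
        refine integral_congr_ae (Filter.Eventually.of_forall fun x => ?_)
        dsimp only
        rw [NNReal.smul_def]; exact e2 x
    _ = (Real.sqrt (2*Real.pi))⁻¹ * ∫ x : ℝ, x ^ n * Real.exp (-x^2/2) :=
        MeasureTheory.integral_const_mul _ _
    _ = gm n := by rw [gauss_int_eq, inv_mul_cancel_left₀ (ne_of_gt hpos)]

lemma integrable_pow_gaussianReal (n : ℕ) :
    Integrable (fun x : ℝ => x ^ n) (gaussianReal 0 1) := by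
  rw [gaussianReal_std]
  have e : (fun x : ℝ => ENNReal.ofReal ((Real.sqrt (2*Real.pi))⁻¹ * Real.exp (-x^2/2)))
      = fun x : ℝ => (((Real.sqrt (2*Real.pi))⁻¹ * Real.exp (-x^2/2)).toNNReal : ℝ≥0∞) :=
    funext fun x => rfl
  rw [e, integrable_withDensity_iff_integrable_smul pdf_meas]
  have : Integrable (fun x : ℝ => (Real.sqrt (2*Real.pi))⁻¹ * (x ^ n * Real.exp (-x^2/2))) :=
    (integrable_pow_gauss n).const_mul _
  refine this.congr (Filter.Eventually.of_forall fun x => ?_)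
  dsimp only
  rw [NNReal.smul_def, Real.coe_toNNReal _ (by positivity), smul_eq_mul]
  ring

section MultisetMoments
variable {d : ℕ}

noncomputable def MM (S : Multiset (Fin d)) : ℝ := ∏ t : Fin d, gm (S.count t)

lemma MM_zero : MM (0 : Multiset (Fin d)) = 1 := by simp [MM, gm]

lemma MA (p : Fin d) (S : Multiset (Fin d)) :
    MM (p ::ₘ S) = (S.count p : ℝ) * MM ((0 : Multiset (Fin d)) + S.erase p) := by
  rw [zero_add, MM, MM, ← Finset.mul_prod_erase Finset.univ _ (Finset.mem_univ p),
    ← Finset.mul_prod_erase Finset.univ _ (Finset.mem_univ p)]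
  have htail : ∏ t ∈ Finset.univ.erase p, gm ((p ::ₘ S).count t)
      = ∏ t ∈ Finset.univ.erase p, gm ((S.erase p).count t) := by
    refine Finset.prod_congr rfl fun t ht => ?_
    have hne : t ≠ p := Finset.ne_of_mem_erase ht
    rw [Multiset.count_cons_of_ne hne, Multiset.count_erase_of_ne hne]
  rw [htail, Multiset.count_cons_self, Multiset.count_erase_self, gm_succ, ← mul_assoc]

lemma MD (p q : Fin d) (S R : Multiset (Fin d)) :
    ((q ::ₘ S).count p : ℝ) * MM (R + (q ::ₘ S).erase p)
      = (if p = q then (1:ℝ) else 0) * MM (R + S)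
        + (S.count p : ℝ) * MM ((q ::ₘ R) + S.erase p) := by
  by_cases h : p = q
  · subst h
    rw [Multiset.count_cons_self, Multiset.erase_cons_head, if_pos rfl, one_mul]
    by_cases h0 : p ∈ S
    · have he : (p ::ₘ R) + S.erase p = R + S := by
        rw [Multiset.cons_add, ← Multiset.add_cons, Multiset.cons_erase h0]
      rw [he]
      push_cast
      ring
    · rw [Multiset.count_eq_zero_of_notMem h0, Multiset.erase_of_notMem h0]
      simp
  · rw [Multiset.count_cons_of_ne h, Multiset.erase_cons_tail _ (Ne.symm h), if_neg h, zero_mul,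
      zero_add, Multiset.add_cons, Multiset.cons_add]

lemma MZ (p : Fin d) (R : Multiset (Fin d)) :
    (((0 : Multiset (Fin d)).count p : ℝ)) * MM (R + (0 : Multiset (Fin d)).erase p) = 0 := by
  simp

lemma M2 (x y : Fin d) : MM (x ::ₘ y ::ₘ 0) = (if x = y then (1:ℝ) else 0) := by
  rw [MA, MD, MZ]
  simp [MM_zero]

lemma M4 (x y z w : Fin d) : MM (x ::ₘ y ::ₘ z ::ₘ w ::ₘ 0)
    = (if x = y then (1:ℝ) else 0) * (if z = w then (1:ℝ) else 0)
      + (if x = z then (1:ℝ) else 0) * (if y = w then (1:ℝ) else 0)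
      + (if x = w then (1:ℝ) else 0) * (if z = y then (1:ℝ) else 0) := by
  rw [MA, MD, MD, MD, MZ]
  simp only [zero_add, Multiset.cons_add, add_zero, mul_zero]
  rw [M2, M2, M2]
  ring

end MultisetMoments

section M6sec
variable {d : ℕ}

noncomputable def W (x y z w : Fin d) : ℝ :=
  (if x = y then (1:ℝ) else 0) * (if z = w then (1:ℝ) else 0)
    + (if x = z then (1:ℝ) else 0) * (if y = w then (1:ℝ) else 0)
    + (if x = w then (1:ℝ) else 0) * (if z = y then (1:ℝ) else 0)

lemma M4' (x y z w : Fin d) : MM (x ::ₘ y ::ₘ z ::ₘ w ::ₘ 0) = W x y z w := M4 x y z w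

lemma M6 (i j k l a b : Fin d) : MM (i ::ₘ j ::ₘ k ::ₘ l ::ₘ a ::ₘ b ::ₘ 0)
    = (if i = j then (1:ℝ) else 0) * W k l a b
      + (if i = k then (1:ℝ) else 0) * W j l a b
      + (if i = l then (1:ℝ) else 0) * W k j a b
      + (if i = a then (1:ℝ) else 0) * W l k j b
      + (if i = b then (1:ℝ) else 0) * W a l k j := by
  rw [MA, MD, MD, MD, MD, MD, MZ]
  simp only [zero_add, Multiset.cons_add, add_zero, mul_zero]
  rw [M4', M4', M4', M4', M4']
  ring

end M6sec

section Prob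
variable {Ω : Type*} [MeasurableSpace Ω] {μ : Measure Ω} [IsProbabilityMeasure μ] {d : ℕ}
  {Z : Ω → Fin d → ℝ}

lemma single_integrable (hmeas : ∀ i, Measurable fun ω => Z ω i)
    (hgauss : ∀ i, Measure.map (fun ω => Z ω i) μ = gaussianReal 0 1)
    (t : Fin d) (n : ℕ) : Integrable (fun ω => (Z ω t) ^ n) μ := by
  have h := integrable_pow_gaussianReal n
  rw [← hgauss t] at h
  exact (integrable_map_measure
    (Measurable.aestronglyMeasurable (by fun_prop : Measurable fun x : ℝ => x ^ n))
    (hmeas t).aemeasurable).mp h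

lemma single_integral (hmeas : ∀ i, Measurable fun ω => Z ω i)
    (hgauss : ∀ i, Measure.map (fun ω => Z ω i) μ = gaussianReal 0 1)
    (t : Fin d) (n : ℕ) : ∫ ω, (Z ω t) ^ n ∂μ = gm n := by
  rw [← integral_pow_gaussianReal n, ← hgauss t]
  exact (integral_map (hmeas t).aemeasurable
    (Measurable.aestronglyMeasurable (by fun_prop : Measurable fun x : ℝ => x ^ n))).symm

lemma prod_integrable_integral (hmeas : ∀ i, Measurable fun ω => Z ω i)
    (hindep : iIndepFun (fun i ω => Z ω i) μ)
    (hgauss : ∀ i, Measure.map (fun ω => Z ω i) μ = gaussianReal 0 1)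
    (c : Fin d → ℕ) (s : Finset (Fin d)) :
    Integrable (fun ω => ∏ t ∈ s, (Z ω t) ^ (c t)) μ ∧
      ∫ ω, ∏ t ∈ s, (Z ω t) ^ (c t) ∂μ = ∏ t ∈ s, gm (c t) := by
  classical
  have hZc : iIndepFun (fun t ω => (Z ω t) ^ (c t)) μ :=
    hindep.comp (fun t (x : ℝ) => x ^ (c t)) (fun t => measurable_id.pow_const (c t))
  have hZcm : ∀ t, Measurable (fun ω => (Z ω t) ^ (c t)) :=
    fun t => (hmeas t).pow_const (c t)
  induction s using Finset.induction with
  | empty => simp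
  | @insert a s ha ih =>
    have hins : (fun ω => ∏ t ∈ insert a s, (Z ω t) ^ (c t))
        = (fun ω => ∏ t ∈ s, (Z ω t) ^ (c t)) * (fun ω => (Z ω a) ^ (c a)) := by
      funext ω
      rw [Finset.prod_insert ha]
      simp [mul_comm]
    have hprodeq : (∏ t ∈ s, (fun ω => (Z ω t) ^ (c t)))
        = fun ω => ∏ t ∈ s, (Z ω t) ^ (c t) := by
      funext ω; simp
    have hind2 : IndepFun (fun ω => ∏ t ∈ s, (Z ω t) ^ (c t)) (fun ω => (Z ω a) ^ (c a)) μ := by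
      have := hZc.indepFun_finset_prod_of_notMem hZcm ha
      rwa [hprodeq] at this
    have hInt : Integrable (fun ω => ∏ t ∈ insert a s, (Z ω t) ^ (c t)) μ := by
      rw [hins]
      exact hind2.integrable_mul ih.1 (single_integrable hmeas hgauss a (c a))
    refine ⟨hInt, ?_⟩
    rw [hins]
    have hmul := hind2.integral_mul_eq_mul_integral ih.1.aestronglyMeasurable
      (single_integrable hmeas hgauss a (c a)).aestronglyMeasurable
    rw [show integral μ ((fun ω => ∏ t ∈ s, (Z ω t) ^ (c t)) * fun ω => Z ω a ^ c a)
        = ∫ ω, ((fun ω => ∏ t ∈ s, (Z ω t) ^ (c t)) * fun ω => Z ω a ^ c a) ω ∂μ from rfl] at hmul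
    rw [hmul, ih.2, single_integral hmeas hgauss a (c a), Finset.prod_insert ha]
    ring

end Prob

lemma prod_count_six {d : ℕ} (f : Fin d → ℝ) (i j k l a b : Fin d) :
    f i * f j * f k * f l * f a * f b
      = ∏ t : Fin d, f t ^ ((i ::ₘ j ::ₘ k ::ₘ l ::ₘ a ::ₘ b ::ₘ 0 : Multiset (Fin d)).count t) := by
  classical
  set S : Multiset (Fin d) := i ::ₘ j ::ₘ k ::ₘ l ::ₘ a ::ₘ b ::ₘ 0 with hS
  have h1 : (S.map f).prod = f i * f j * f k * f l * f a * f b := by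
    simp [hS]; ring
  rw [← h1, Finset.prod_multiset_map_count]
  refine Finset.prod_subset (Finset.subset_univ _) fun t _ ht => ?_
  rw [Multiset.count_eq_zero_of_notMem (by simpa [Multiset.mem_toFinset] using ht), pow_zero]

lemma sum_if_pull {α : Type*} {s : Finset α} (c : Prop) [Decidable c] (f : α → ℝ) :
    (∑ x ∈ s, if c then f x else 0) = if c then ∑ x ∈ s, f x else 0 := by
  split <;> simp



open MeasureTheory ProbabilityTheory Matrix

/-- For `Z` with i.i.d. standard Gaussian coordinates and symmetric `P`:
`E[(ZᵀPZ)²·ZZᵀ] = 8P² + 4·Tr(P)·P + (2·Tr(P²) + (Tr P)²)·I` (entrywise). -/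
theorem gaussian_quadratic_sq_times_outer {Ω : Type*} [MeasurableSpace Ω]
    (μ : Measure Ω) [IsProbabilityMeasure μ] {d : ℕ} (Z : Ω → Fin d → ℝ)
    (hmeas : ∀ i, Measurable fun ω => Z ω i)
    (hindep : iIndepFun (fun i ω => Z ω i) μ)
    (hgauss : ∀ i, Measure.map (fun ω => Z ω i) μ = gaussianReal 0 1)
    (P : Matrix (Fin d) (Fin d) ℝ) (hsymm : P.IsSymm) :
    ∀ a b, ∫ ω, (∑ i, ∑ j, Z ω i * P i j * Z ω j) ^ 2 * (vecMulVec (Z ω) (Z ω) a b) ∂μ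
      = ((8 : ℝ) • P ^ 2 + (4 * P.trace) • P
          + (2 * (P ^ 2).trace + P.trace ^ 2) • (1 : Matrix (Fin d) (Fin d) ℝ)) a b := by
  classical
  intro a b
  have hP : ∀ x y, P y x = P x y := fun x y => hsymm.apply x y
  -- expectation of a sextic monomial
  have key : ∀ i j k l : Fin d,
      Integrable (fun ω => Z ω i * Z ω j * Z ω k * Z ω l * Z ω a * Z ω b) μ ∧
      ∫ ω, Z ω i * Z ω j * Z ω k * Z ω l * Z ω a * Z ω b ∂μ
        = MM (i ::ₘ j ::ₘ k ::ₘ l ::ₘ a ::ₘ b ::ₘ 0 : Multiset (Fin d)) := by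
    intro i j k l
    set S : Multiset (Fin d) := i ::ₘ j ::ₘ k ::ₘ l ::ₘ a ::ₘ b ::ₘ 0 with hS
    have he : (fun ω => Z ω i * Z ω j * Z ω k * Z ω l * Z ω a * Z ω b)
        = fun ω => ∏ t : Fin d, (Z ω t) ^ (S.count t) :=
      funext fun ω => prod_count_six (Z ω) i j k l a b
    have hc := prod_integrable_integral hmeas hindep hgauss (fun t => S.count t) Finset.univ
    exact ⟨he ▸ hc.1, by rw [he, hc.2]; rfl⟩
  -- expand the integrand into monomials
  have expand : ∀ ω, (∑ i, ∑ j, Z ω i * P i j * Z ω j) ^ 2 * (vecMulVec (Z ω) (Z ω) a b)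
      = ∑ i, ∑ j, ∑ k, ∑ l,
          P i j * P k l * (Z ω i * Z ω j * Z ω k * Z ω l * Z ω a * Z ω b) := by
    intro ω
    rw [Matrix.vecMulVec_apply, sq]
    simp only [Finset.sum_mul, Finset.mul_sum]
    refine Finset.sum_congr rfl fun i _ => Finset.sum_congr rfl fun j _ => ?_
    rw [Finset.sum_comm]
    refine Finset.sum_congr rfl fun k _ => Finset.sum_congr rfl fun l _ => ?_
    rw [hP k l]
    ring
  rw [integral_congr_ae (Filter.Eventually.of_forall expand)]
  have hswap : ∫ ω, (∑ i, ∑ j, ∑ k, ∑ l,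
        P i j * P k l * (Z ω i * Z ω j * Z ω k * Z ω l * Z ω a * Z ω b)) ∂μ
      = ∑ i, ∑ j, ∑ k, ∑ l, P i j * P k l * MM (i ::ₘ j ::ₘ k ::ₘ l ::ₘ a ::ₘ b ::ₘ 0) := by
    rw [integral_finset_sum _ fun i _ => integrable_finset_sum _ fun j _ =>
      integrable_finset_sum _ fun k _ => integrable_finset_sum _ fun l _ =>
        ((key i j k l).1.const_mul _)]
    refine Finset.sum_congr rfl fun i _ => ?_
    rw [integral_finset_sum _ fun j _ => integrable_finset_sum _ fun k _ =>
      integrable_finset_sum _ fun l _ => ((key i j k l).1.const_mul _)]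
    refine Finset.sum_congr rfl fun j _ => ?_
    rw [integral_finset_sum _ fun k _ => integrable_finset_sum _ fun l _ =>
        ((key i j k l).1.const_mul _)]
    refine Finset.sum_congr rfl fun k _ => ?_
    rw [integral_finset_sum _ fun l _ => ((key i j k l).1.const_mul _)]
    refine Finset.sum_congr rfl fun l _ => ?_
    rw [integral_const_mul, (key i j k l).2]
  rw [hswap]
  simp_rw [M6]
  simp only [W, mul_add, Finset.sum_add_distrib, mul_ite, ite_mul, mul_one, one_mul,
    mul_zero, zero_mul, Finset.sum_ite_eq, Finset.sum_ite_eq', Finset.mem_univ, if_true]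
  simp only [Matrix.add_apply, Matrix.smul_apply, smul_eq_mul, Matrix.one_apply,
    Matrix.trace, Matrix.diag, pow_two, Matrix.mul_apply]
  simp only [sum_if_pull, Finset.sum_ite_eq, Finset.sum_ite_eq', Finset.mem_univ, if_true]
  have ha1 : ∀ x : Fin d, P x a = P a x := fun x => hP a x
  have hb1 : ∀ x : Fin d, P b x = P x b := fun x => hP x b
  have hdd : ∑ x : Fin d, ∑ x1 : Fin d, P x x1 * P x x1
      = ∑ x : Fin d, ∑ x1 : Fin d, P x x1 * P x1 x :=
    Finset.sum_congr rfl fun x _ => Finset.sum_congr rfl fun x1 _ => by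
      nth_rewrite 2 [hP x1 x]; rfl
  rw [hdd]
  simp only [ha1, hb1]
  by_cases hab : a = b
  · subst hab
    simp only [if_pos rfl]
    simp only [← Finset.sum_mul, ← Finset.mul_sum]
    have hcomm : ∑ x : Fin d, P x a * P a x = ∑ x : Fin d, P a x * P x a :=
      Finset.sum_congr rfl fun x _ => mul_comm _ _
    rw [hcomm]
    simp only [if_true]
    ring
  · simp only [if_neg hab]
    simp only [← Finset.sum_mul, ← Finset.mul_sum]
    have hcomm : ∑ x : Fin d, P x b * P a x = ∑ x : Fin d, P a x * P x b :=
      Finset.sum_congr rfl fun x _ => mul_comm _ _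
    rw [hcomm]
    ring
end
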